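/- arXiv:2506.17893 — 11 statements merged into one kernel-verified Lean document; each statement's English description precedes it below -/
import Mathlib

section
/- Let F_q be a finite field, let c₁ ∈ F_q be nonzero, and let A₁ = [[c₁, 0], [0, 0]] ∈ M₂(F_q). Then the number of solutions X ∈ M₂(F_q) of the Yang–Baxter matrix equation XA₁X = A₁XA₁ is exactly 2q², i.e., |D_{A₁}(F_q)| = 2q². -/
theorem ybe_char_lemma {F : Type*} [Field F] (c₁ : F) (hc₁ : c₁ ≠ 0)
    (X : Matrix (Fin 2) (Fin 2) F) :
    X * !![c₁, 0; 0, 0] * X = !![c₁, 0; 0, 0] * X * !![c₁, 0; 0, 0] ↔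
    ((X 0 0 = c₁ ∧ X 0 1 = 0 ∧ X 1 0 = 0) ∨ (X 0 0 = 0 ∧ (X 0 1 = 0 ∨ X 1 0 = 0))) := by
  rw [← Matrix.ext_iff]
  simp only [Fin.forall_fin_two, Matrix.mul_apply, Fin.sum_univ_two]
  simp [hc₁]
  constructor
  · rintro ⟨⟨h1, h2⟩, h3, h4⟩
    rcases eq_or_ne (X 0 0) 0 with ha | ha
    · exact Or.inr ⟨ha, h4.symm⟩
    · have hb := h2.resolve_left ha
      have hc := h3.resolve_right ha
      have h1' : c₁ * X 0 0 * X 0 0 = c₁ * X 0 0 * c₁ := by linear_combination h1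
      exact Or.inl ⟨mul_left_cancel₀ (mul_ne_zero hc₁ ha) h1', hb, hc⟩
  · rintro (⟨h1, h2, h3⟩ | ⟨h1, h2 | h2⟩) <;> simp_all

noncomputable def ybeG {F : Type*} [Field F] (c₁ : F) : Bool × F × F → Matrix (Fin 2) (Fin 2) F :=
  fun p =>
    letI := Classical.decEq F
    if p.1 then (if p.2.1 = 0 then !![c₁, 0; 0, p.2.2] else !![0, p.2.1; 0, p.2.2])
    else !![0, 0; p.2.1, p.2.2]

theorem ybeG_mem {F : Type*} [Field F] (c₁ : F) (hc₁ : c₁ ≠ 0) (p : Bool × F × F) :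
    (ybeG c₁ p) 0 0 = c₁ ∧ (ybeG c₁ p) 0 1 = 0 ∧ (ybeG c₁ p) 1 0 = 0 ∨
      (ybeG c₁ p) 0 0 = 0 ∧ ((ybeG c₁ p) 0 1 = 0 ∨ (ybeG c₁ p) 1 0 = 0) := by
  obtain ⟨b, x, y⟩ := p
  cases b <;> simp only [ybeG] <;> split_ifs <;> simp

theorem ybeG_inj {F : Type*} [Field F] (c₁ : F) (hc₁ : c₁ ≠ 0) :
    Function.Injective (ybeG c₁) := by
  rintro ⟨b1, x1, y1⟩ ⟨b2, x2, y2⟩ h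
  rw [← Matrix.ext_iff] at h
  simp only [Fin.forall_fin_two] at h
  cases b1 <;> cases b2 <;> simp only [ybeG] at h <;> split_ifs at h <;>
    simp_all [Prod.ext_iff]

theorem ybeG_surj {F : Type*} [Field F] (c₁ : F) (hc₁ : c₁ ≠ 0) (X : Matrix (Fin 2) (Fin 2) F)
    (hX : (X 0 0 = c₁ ∧ X 0 1 = 0 ∧ X 1 0 = 0) ∨ (X 0 0 = 0 ∧ (X 0 1 = 0 ∨ X 1 0 = 0))) :
    ∃ p, ybeG c₁ p = X := by
  rcases hX with ⟨h1, h2, h3⟩ | ⟨h1, h2⟩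
  · refine ⟨(true, 0, X 1 1), ?_⟩
    rw [Matrix.eta_fin_two X]
    simp [ybeG, h1, h2, h3]
  · rcases eq_or_ne (X 0 1) 0 with hb | hb
    · refine ⟨(false, X 1 0, X 1 1), ?_⟩
      rw [Matrix.eta_fin_two X]
      simp [ybeG, h1, hb]
    · have hc := h2.resolve_left hb
      refine ⟨(true, X 0 1, X 1 1), ?_⟩
      rw [Matrix.eta_fin_two X]
      simp [ybeG, h1, hb, hc]

/-- For `A₁ = [[c₁, 0], [0, 0]]` with `c₁ ≠ 0` over a finite field of order `q`,
the Yang–Baxter matrix equation `X A₁ X = A₁ X A₁` has exactly `2 q²` solutions. -/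
theorem stmt_4 {F : Type*} [Field F] [Fintype F] (c₁ : F) (hc₁ : c₁ ≠ 0) :
    Nat.card {X : Matrix (Fin 2) (Fin 2) F |
        X * !![c₁, 0; 0, 0] * X = !![c₁, 0; 0, 0] * X * !![c₁, 0; 0, 0]} =
      2 * Fintype.card F ^ 2 := by
  have hf : Function.Bijective (fun p : Bool × F × F =>
      (⟨ybeG c₁ p, (ybe_char_lemma c₁ hc₁ _).mpr (ybeG_mem c₁ hc₁ p)⟩ :
        {X : Matrix (Fin 2) (Fin 2) F |
          X * !![c₁, 0; 0, 0] * X = !![c₁, 0; 0, 0] * X * !![c₁, 0; 0, 0]})) := by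
    constructor
    · intro p q h
      exact ybeG_inj c₁ hc₁ (congrArg Subtype.val h)
    · rintro ⟨X, hX⟩
      obtain ⟨p, hp⟩ := ybeG_surj c₁ hc₁ X ((ybe_char_lemma c₁ hc₁ X).mp hX)
      exact ⟨p, Subtype.ext hp⟩
  rw [← Nat.card_eq_of_bijective _ hf]
  simp [Nat.card_eq_fintype_card, sq, mul_assoc]
end

section
/- Let F_q be a finite field, let c₁ ∈ F_q be nonzero, and let A₁ = [[c₁, 0], [0, 0]] ∈ M₂(F_q). Then the solution set D_{A₁}(F_q) equals the union D₁ ∪ D₂ ∪ D₃, where D₁ = {[[0,0],[a,b]] : a, b ∈ F_q}, D₂ = {[[0,a],[0,b]] : a, b ∈ F_q}, and D₃ = {[[c₁,0],[0,a]] : a ∈ F_q}. -/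
/-- For `A₁ = [[c₁, 0], [0, 0]]` with `c₁ ≠ 0` over a finite field, the solution set of
`X A₁ X = A₁ X A₁` is the union `D₁ ∪ D₂ ∪ D₃` of the three explicit families below. -/
theorem stmt_5 {F : Type*} [Field F] [Fintype F] (c₁ : F) (hc₁ : c₁ ≠ 0) :
    {X : Matrix (Fin 2) (Fin 2) F |
        X * !![c₁, 0; 0, 0] * X = !![c₁, 0; 0, 0] * X * !![c₁, 0; 0, 0]} =
      {X : Matrix (Fin 2) (Fin 2) F | ∃ a b : F, X = !![0, 0; a, b]} ∪
        {X : Matrix (Fin 2) (Fin 2) F | ∃ a b : F, X = !![0, a; 0, b]} ∪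
        {X : Matrix (Fin 2) (Fin 2) F | ∃ a : F, X = !![c₁, 0; 0, a]} := by
  ext X
  rw [Matrix.eta_fin_two X]
  set x := X 0 0; set y := X 0 1; set z := X 1 0; set w := X 1 1
  simp only [Set.mem_setOf_eq, Set.mem_union, Matrix.mul_fin_two, ← Matrix.ext_iff,
    Fin.forall_fin_two, Matrix.of_apply, Matrix.cons_val', Matrix.cons_val_zero,
    Matrix.cons_val_one, Matrix.head_cons, Matrix.head_fin_const, Matrix.empty_val',
    Matrix.cons_val_fin_one]
  constructor
  · rintro ⟨⟨h1, h2⟩, h3, h4⟩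
    ring_nf at h1 h2 h3 h4
    have hyz : y = 0 ∨ z = 0 := by
      rcases mul_eq_zero.1 h4 with h | h
      · exact Or.inl ((mul_eq_zero.1 h).resolve_left hc₁)
      · exact Or.inr h
    by_cases hx0 : x = 0
    · rcases hyz with hy | hz
      · exact Or.inl (Or.inl ⟨z, w, ⟨hx0, hy⟩, rfl, rfl⟩)
      · exact Or.inl (Or.inr ⟨y, w, ⟨hx0, rfl⟩, hz, rfl⟩)
    · have hxc : x = c₁ := by
        have : x * (x * c₁) = c₁ * (x * c₁) := by ring_nf; linear_combination h1
        exact mul_right_cancel₀ (mul_ne_zero hx0 hc₁) this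
      have hy : y = 0 := by
        rcases mul_eq_zero.1 h2 with h | h
        · exact absurd ((mul_eq_zero.1 h).resolve_right hc₁) hx0
        · exact h
      have hz : z = 0 := by
        rcases mul_eq_zero.1 h3 with h | h
        · exact absurd ((mul_eq_zero.1 h).resolve_right hc₁) hx0
        · exact h
      exact Or.inr ⟨w, ⟨hxc, hy⟩, hz, rfl⟩
  · rintro ((⟨a, b, ⟨hx, hy⟩, hz, hw⟩ | ⟨a, b, ⟨hx, hy⟩, hz, hw⟩) | ⟨a, ⟨hx, hy⟩, hz, hw⟩) <;>
      refine ⟨⟨?_, ?_⟩, ?_, ?_⟩ <;> rw [hx, hy, hz] <;> ring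
end

section
/- Let F_q be a finite field, let c₁ ∈ F_q be nonzero, and work in the polynomial ring R = F_q[x₁₁, x₁₂, x₂₁, x₂₂]. Let J be the ideal of R generated by {x₁₁x₁₂, x₁₁x₂₁, x₁₂x₂₁, x₁₁² − c₁x₁₁}, and let 𝔭₁ = ⟨x₁₁, x₁₂⟩, 𝔭₂ = ⟨x₁₁, x₂₁⟩, 𝔭₃ = ⟨x₁₁ − c₁, x₁₂, x₂₁⟩. Then 𝔭₁, 𝔭₂, 𝔭₃ are prime ideals of R, the product ideal 𝔭₁·𝔭₂·𝔭₃ is contained in J, and J = 𝔭₁ ∩ 𝔭₂ ∩ 𝔭₃; in particular J is a radical ideal of R. -/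
open MvPolynomial Ideal

lemma sub_aeval_mem {F : Type*} [CommRing F] (g : Fin 4 → MvPolynomial (Fin 4) F)
    (f : MvPolynomial (Fin 4) F) :
    f - MvPolynomial.aeval g f ∈ Ideal.span (Set.range fun i => MvPolynomial.X i - g i) := by
  induction f using MvPolynomial.induction_on with
  | C a => simp
  | add p q hp hq =>
      have : p + q - aeval g (p + q) = (p - aeval g p) + (q - aeval g q) := by
        simp only [map_add]; ring
      rw [this]; exact add_mem hp hq
  | mul_X p i hp =>
      have : p * X i - aeval g (p * X i)
          = (p - aeval g p) * X i + aeval g p * (X i - g i) := by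
        simp only [_root_.map_mul, aeval_X]; ring
      rw [this]
      exact add_mem (Ideal.mul_mem_right _ _ hp)
        (Ideal.mul_mem_left _ _ (Ideal.subset_span ⟨i, rfl⟩))

lemma stmt_6_aux {F : Type*} [Field F] (c₁ : F) (hc₁ : c₁ ≠ 0) :
    (Ideal.span {MvPolynomial.X 0, MvPolynomial.X 1} :
        Ideal (MvPolynomial (Fin 4) F)).IsPrime ∧
    (Ideal.span {MvPolynomial.X 0, MvPolynomial.X 2} :
        Ideal (MvPolynomial (Fin 4) F)).IsPrime ∧
    (Ideal.span {MvPolynomial.X 0 - MvPolynomial.C c₁, MvPolynomial.X 1, MvPolynomial.X 2} :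
        Ideal (MvPolynomial (Fin 4) F)).IsPrime ∧
    (Ideal.span {MvPolynomial.X 0, MvPolynomial.X 1} :
          Ideal (MvPolynomial (Fin 4) F)) *
        Ideal.span {MvPolynomial.X 0, MvPolynomial.X 2} *
        Ideal.span {MvPolynomial.X 0 - MvPolynomial.C c₁, MvPolynomial.X 1, MvPolynomial.X 2} ≤
      Ideal.span {MvPolynomial.X 0 * MvPolynomial.X 1, MvPolynomial.X 0 * MvPolynomial.X 2,
        MvPolynomial.X 1 * MvPolynomial.X 2,
        MvPolynomial.X 0 ^ 2 - MvPolynomial.C c₁ * MvPolynomial.X 0} ∧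
    (Ideal.span {MvPolynomial.X 0 * MvPolynomial.X 1, MvPolynomial.X 0 * MvPolynomial.X 2,
        MvPolynomial.X 1 * MvPolynomial.X 2,
        MvPolynomial.X 0 ^ 2 - MvPolynomial.C c₁ * MvPolynomial.X 0} :
          Ideal (MvPolynomial (Fin 4) F))
      = Ideal.span {MvPolynomial.X 0, MvPolynomial.X 1} ⊓
          Ideal.span {MvPolynomial.X 0, MvPolynomial.X 2} ⊓
          Ideal.span
            {MvPolynomial.X 0 - MvPolynomial.C c₁, MvPolynomial.X 1, MvPolynomial.X 2} ∧
    (Ideal.span {MvPolynomial.X 0 * MvPolynomial.X 1, MvPolynomial.X 0 * MvPolynomial.X 2,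
        MvPolynomial.X 1 * MvPolynomial.X 2,
        MvPolynomial.X 0 ^ 2 - MvPolynomial.C c₁ * MvPolynomial.X 0} :
        Ideal (MvPolynomial (Fin 4) F)).IsRadical := by
  set J : Ideal (MvPolynomial (Fin 4) F) :=
    Ideal.span {X 0 * X 1, X 0 * X 2, X 1 * X 2, X 0 ^ 2 - C c₁ * X 0} with hJdef
  set p₁ : Ideal (MvPolynomial (Fin 4) F) := Ideal.span {X 0, X 1} with hp₁def
  set p₂ : Ideal (MvPolynomial (Fin 4) F) := Ideal.span {X 0, X 2} with hp₂def
  set p₃ : Ideal (MvPolynomial (Fin 4) F) := Ideal.span {X 0 - C c₁, X 1, X 2} with hp₃def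
  have hker : ∀ (g : Fin 4 → MvPolynomial (Fin 4) F) (p : Ideal (MvPolynomial (Fin 4) F)),
      (∀ i : Fin 4, X i - g i ∈ p) →
      (p ≤ RingHom.ker (aeval g : MvPolynomial (Fin 4) F →ₐ[F] MvPolynomial (Fin 4) F)) →
      p = RingHom.ker (aeval g : MvPolynomial (Fin 4) F →ₐ[F] MvPolynomial (Fin 4) F) := by
    intro g p hle hz
    apply le_antisymm hz
    intro s hs
    have h2 : Ideal.span (Set.range fun i => X i - g i) ≤ p := by
      rw [Ideal.span_le]; rintro y ⟨i, rfl⟩; exact hle i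
    have h3 : s - aeval g s ∈ p := h2 (sub_aeval_mem g s)
    have h0 : (aeval g : MvPolynomial (Fin 4) F →ₐ[F] MvPolynomial (Fin 4) F) s = 0 := hs
    rwa [h0, sub_zero] at h3
  have m10 : X 0 ∈ p₁ := Ideal.subset_span (by simp)
  have m11 : X 1 ∈ p₁ := Ideal.subset_span (by simp)
  have m20 : X 0 ∈ p₂ := Ideal.subset_span (by simp)
  have m22 : X 2 ∈ p₂ := Ideal.subset_span (by simp)
  have m30 : X 0 - C c₁ ∈ p₃ := Ideal.subset_span (by simp)
  have m31 : X 1 ∈ p₃ := Ideal.subset_span (by simp)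
  have m32 : X 2 ∈ p₃ := Ideal.subset_span (by simp)
  have hJ1 : X 0 * X 1 ∈ J := Ideal.subset_span (by simp)
  have hJ2 : X 0 * X 2 ∈ J := Ideal.subset_span (by simp)
  have hJ3 : X 1 * X 2 ∈ J := Ideal.subset_span (by simp)
  have hJ4 : X 0 ^ 2 - C c₁ * X 0 ∈ J := Ideal.subset_span (by simp)
  have hk1 : p₁ = RingHom.ker
      (aeval ![0, 0, X 2, X 3] : MvPolynomial (Fin 4) F →ₐ[F] MvPolynomial (Fin 4) F) := by
    apply hker
    · intro i; fin_cases i <;> simp <;> first | exact m10 | exact m11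
    · rw [hp₁def, Ideal.span_le]; rintro y hy
      simp only [Set.mem_insert_iff, Set.mem_singleton_iff] at hy
      rcases hy with rfl | rfl <;> simp [RingHom.mem_ker]
  have hk2 : p₂ = RingHom.ker
      (aeval ![0, X 1, 0, X 3] : MvPolynomial (Fin 4) F →ₐ[F] MvPolynomial (Fin 4) F) := by
    apply hker
    · intro i; fin_cases i <;> simp <;> first | exact m20 | exact m22
    · rw [hp₂def, Ideal.span_le]; rintro y hy
      simp only [Set.mem_insert_iff, Set.mem_singleton_iff] at hy
      rcases hy with rfl | rfl <;> simp [RingHom.mem_ker]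
  have hk3 : p₃ = RingHom.ker
      (aeval ![C c₁, 0, 0, X 3] : MvPolynomial (Fin 4) F →ₐ[F] MvPolynomial (Fin 4) F) := by
    apply hker
    · intro i; fin_cases i <;> simp <;> first | exact m30 | exact m31 | exact m32
    · rw [hp₃def, Ideal.span_le]; rintro y hy
      simp only [Set.mem_insert_iff, Set.mem_singleton_iff] at hy
      rcases hy with rfl | rfl | rfl <;> simp [RingHom.mem_ker]
  have hp₁ : p₁.IsPrime := by rw [hk1]; exact RingHom.ker_isPrime _
  have hp₂ : p₂.IsPrime := by rw [hk2]; exact RingHom.ker_isPrime _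
  have hp₃ : p₃.IsPrime := by rw [hk3]; exact RingHom.ker_isPrime _
  have hX1 : (X 1 : MvPolynomial (Fin 4) F) ∉ p₂ := by
    rw [hk2]
    intro h
    have := RingHom.mem_ker.mp h
    simp at this
  set q : Ideal (MvPolynomial (Fin 4) F) := Ideal.span {X 0, X 1 * X 2} with hqdef
  have hq0 : (X 0 : MvPolynomial (Fin 4) F) ∈ q := Ideal.subset_span (by simp)
  have hq12 : (X 1 * X 2 : MvPolynomial (Fin 4) F) ∈ q := Ideal.subset_span (by simp)
  have hqeq : q = p₁ ⊓ p₂ := by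
    apply le_antisymm
    · rw [hqdef, Ideal.span_le]; rintro y hy
      simp only [Set.mem_insert_iff, Set.mem_singleton_iff] at hy
      rcases hy with rfl | rfl
      · exact ⟨m10, m20⟩
      · exact ⟨Ideal.mul_mem_right _ _ m11, Ideal.mul_mem_left _ _ m22⟩
    · rintro f ⟨hf1, hf2⟩
      obtain ⟨a, b, hab⟩ := Ideal.mem_span_pair.mp hf1
      have hb : b * X 1 ∈ p₂ := by
        have h1 : f - a * X 0 ∈ p₂ := sub_mem hf2 (Ideal.mul_mem_left _ _ m20)
        have heq : b * X 1 = f - a * X 0 := by linear_combination hab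
        rwa [heq]
      have hbmem : b ∈ p₂ := by
        rcases hp₂.mem_or_mem hb with h | h
        · exact h
        · exact absurd h hX1
      obtain ⟨c, d, hcd⟩ := Ideal.mem_span_pair.mp hbmem
      exact Ideal.mem_span_pair.mpr ⟨a + X 1 * c, d, by linear_combination hab + X 1 * hcd⟩
  have hcop : q ⊔ p₃ = ⊤ := by
    rw [Ideal.eq_top_iff_one]
    have h1 : (C c₁ : MvPolynomial (Fin 4) F) ∈ q ⊔ p₃ := by
      have := sub_mem (Ideal.mem_sup_left hq0) (Ideal.mem_sup_right m30)
      simpa using this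
    have h2 := Ideal.mul_mem_left _ (C c₁⁻¹) h1
    rwa [← C_mul, inv_mul_cancel₀ hc₁, C_1] at h2
  have hmul : q * p₃ = J := by
    apply le_antisymm
    · rw [Ideal.mul_le]
      intro r hr s hs
      obtain ⟨a, b, hab⟩ := Ideal.mem_span_pair.mp hr
      have key : ∀ t ∈ ({X 0 - C c₁, X 1, X 2} : Set (MvPolynomial (Fin 4) F)), r * t ∈ J := by
        intro t ht
        simp only [Set.mem_insert_iff, Set.mem_singleton_iff] at ht
        have e0 : X 0 * (X 0 - C c₁) ∈ J := by
          have e : (X 0 : MvPolynomial (Fin 4) F) * (X 0 - C c₁) = X 0 ^ 2 - C c₁ * X 0 := by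
            ring
          rw [e]; exact hJ4
        rcases ht with rfl | rfl | rfl
        · have h2 : X 1 * X 2 * (X 0 - C c₁) ∈ J := by
            have e : (X 1 : MvPolynomial (Fin 4) F) * X 2 * (X 0 - C c₁)
                = X 2 * (X 0 * X 1) - C c₁ * (X 1 * X 2) := by ring
            rw [e]
            exact sub_mem (Ideal.mul_mem_left _ _ hJ1) (Ideal.mul_mem_left _ _ hJ3)
          have e : r * (X 0 - C c₁)
              = a * (X 0 * (X 0 - C c₁)) + b * (X 1 * X 2 * (X 0 - C c₁)) := by
            linear_combination (-(X 0 : MvPolynomial (Fin 4) F) + C c₁) * hab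
          rw [e]
          exact add_mem (Ideal.mul_mem_left _ _ e0) (Ideal.mul_mem_left _ _ h2)
        · have e : r * X 1 = a * (X 0 * X 1) + (b * X 1) * (X 1 * X 2) := by
            linear_combination (-(X 1 : MvPolynomial (Fin 4) F)) * hab
          rw [e]
          exact add_mem (Ideal.mul_mem_left _ _ hJ1) (Ideal.mul_mem_left _ _ hJ3)
        · have e : r * X 2 = a * (X 0 * X 2) + (b * X 2) * (X 1 * X 2) := by
            linear_combination (-(X 2 : MvPolynomial (Fin 4) F)) * hab
          rw [e]
          exact add_mem (Ideal.mul_mem_left _ _ hJ2) (Ideal.mul_mem_left _ _ hJ3)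
      have hs' : s ∈ Ideal.span ({X 0 - C c₁, X 1, X 2} : Set (MvPolynomial (Fin 4) F)) := hs
      refine Submodule.span_induction (fun t ht => key t ht) (by simp) ?_ ?_ hs'
      · intro u v _ _ hu hv
        have e : r * (u + v) = r * u + r * v := by ring
        rw [e]; exact add_mem hu hv
      · intro m u _ hu
        have e : r * (m • u) = m * (r * u) := by
          simp only [smul_eq_mul]; ring
        rw [e]; exact Ideal.mul_mem_left _ _ hu
    · rw [hJdef, Ideal.span_le]
      rintro y hy
      simp only [Set.mem_insert_iff, Set.mem_singleton_iff] at hy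
      rcases hy with rfl | rfl | rfl | rfl
      · exact Ideal.mul_mem_mul hq0 m31
      · exact Ideal.mul_mem_mul hq0 m32
      · have hA : X 1 * X 2 * (X 0 - C c₁) ∈ q * p₃ := Ideal.mul_mem_mul hq12 m30
        have hB : X 1 * (X 0 * X 2) ∈ q * p₃ :=
          Ideal.mul_mem_left _ _ (Ideal.mul_mem_mul hq0 m32)
        have h := Ideal.mul_mem_left _ (C (-c₁⁻¹)) (sub_mem hA hB)
        have e : C (-c₁⁻¹) * (X 1 * X 2 * (X 0 - C c₁) - X 1 * (X 0 * X 2))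
            = C (c₁⁻¹ * c₁) * ((X 1 : MvPolynomial (Fin 4) F) * X 2) := by
          simp only [map_neg, _root_.map_mul]; ring
        rw [e, inv_mul_cancel₀ hc₁, C_1, one_mul] at h
        exact h
      · have e : (X 0 : MvPolynomial (Fin 4) F) ^ 2 - C c₁ * X 0 = X 0 * (X 0 - C c₁) := by
          ring
        rw [e]; exact Ideal.mul_mem_mul hq0 m30
  have hJeq : J = p₁ ⊓ p₂ ⊓ p₃ := by
    rw [← hmul, Ideal.mul_eq_inf_of_coprime hcop, hqeq]
  have hle : p₁ * p₂ * p₃ ≤ J := by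
    rw [hJeq]
    calc p₁ * p₂ * p₃ ≤ (p₁ ⊓ p₂) * p₃ := Ideal.mul_mono_left Ideal.mul_le_inf
      _ ≤ (p₁ ⊓ p₂) ⊓ p₃ := Ideal.mul_le_inf
  have hrad : J.IsRadical := by
    rw [hJeq]
    exact (hp₁.isRadical.inf hp₂.isRadical).inf hp₃.isRadical
  rw [hp₁def] at hp₁
  rw [hp₂def] at hp₂
  rw [hp₃def] at hp₃
  rw [hJdef, hp₁def, hp₂def, hp₃def] at hJeq hle
  rw [hJdef] at hrad
  exact ⟨hp₁, hp₂, hp₃, hle, hJeq, hrad⟩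

/-- In `R = F_q[x₁₁, x₁₂, x₂₁, x₂₂]` (variables `X 0, X 1, X 2, X 3`), with
`J = ⟨x₁₁x₁₂, x₁₁x₂₁, x₁₂x₂₁, x₁₁² − c₁x₁₁⟩`, `𝔭₁ = ⟨x₁₁, x₁₂⟩`, `𝔭₂ = ⟨x₁₁, x₂₁⟩`,
`𝔭₃ = ⟨x₁₁ − c₁, x₁₂, x₂₁⟩`: the `𝔭ᵢ` are prime, `𝔭₁·𝔭₂·𝔭₃ ⊆ J`,
`J = 𝔭₁ ∩ 𝔭₂ ∩ 𝔭₃`, and `J` is radical. -/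
theorem stmt_6 {F : Type*} [Field F] [Fintype F] (c₁ : F) (hc₁ : c₁ ≠ 0) :
    let x : Fin 4 → MvPolynomial (Fin 4) F := MvPolynomial.X
    let J : Ideal (MvPolynomial (Fin 4) F) :=
      Ideal.span {x 0 * x 1, x 0 * x 2, x 1 * x 2, x 0 ^ 2 - MvPolynomial.C c₁ * x 0}
    let p₁ : Ideal (MvPolynomial (Fin 4) F) := Ideal.span {x 0, x 1}
    let p₂ : Ideal (MvPolynomial (Fin 4) F) := Ideal.span {x 0, x 2}
    let p₃ : Ideal (MvPolynomial (Fin 4) F) :=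
      Ideal.span {x 0 - MvPolynomial.C c₁, x 1, x 2}
    p₁.IsPrime ∧ p₂.IsPrime ∧ p₃.IsPrime ∧
      p₁ * p₂ * p₃ ≤ J ∧ J = p₁ ⊓ p₂ ⊓ p₃ ∧ J.IsRadical := by
  intro x J p₁ p₂ p₃
  exact stmt_6_aux c₁ hc₁
end

section
/- Let F_q be a finite field and let c₁, c₂ be two distinct nonzero elements of F_q with c₁² − c₁c₂ + c₂² = 0. Let A₁ = [[c₁, 0], [0, c₂]] ∈ M₂(F_q). Then |D_{A₁}(F_q)| = 2q + 2, and D_{A₁}(F_q) equals the union of the three points {[[0,0],[0,0]], [[c₁,0],[0,0]], [[0,0],[0,c₂]]} with the two families E₁ = {[[c₁,0],[a,c₂]] : a ∈ F_q} and E₂ = {[[c₁,a],[0,c₂]] : a ∈ F_q}. -/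
/-- For `A₁ = diag(c₁, c₂)` with `c₁, c₂` distinct nonzero and `c₁² − c₁c₂ + c₂² = 0`,
the solution set has cardinality `2q + 2` and consists of three isolated points together
with the two one-parameter families `E₁` and `E₂`. -/
theorem stmt_7 {F : Type*} [Field F] [Fintype F] (c₁ c₂ : F)
    (hc₁ : c₁ ≠ 0) (hc₂ : c₂ ≠ 0) (hne : c₁ ≠ c₂)
    (hδ : c₁ ^ 2 - c₁ * c₂ + c₂ ^ 2 = 0) :
    Nat.card {X : Matrix (Fin 2) (Fin 2) F |
        X * !![c₁, 0; 0, c₂] * X = !![c₁, 0; 0, c₂] * X * !![c₁, 0; 0, c₂]} =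
      2 * Fintype.card F + 2 ∧
    {X : Matrix (Fin 2) (Fin 2) F |
        X * !![c₁, 0; 0, c₂] * X = !![c₁, 0; 0, c₂] * X * !![c₁, 0; 0, c₂]} =
      ({!![0, 0; 0, 0], !![c₁, 0; 0, 0], !![0, 0; 0, c₂]} :
          Set (Matrix (Fin 2) (Fin 2) F)) ∪
        {X : Matrix (Fin 2) (Fin 2) F | ∃ a : F, X = !![c₁, 0; a, c₂]} ∪
        {X : Matrix (Fin 2) (Fin 2) F | ∃ a : F, X = !![c₁, a; 0, c₂]} := by
  have key : ∀ x y z w : F,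
      (!![x,y;z,w] * !![c₁,0;0,c₂] * !![x,y;z,w] = !![c₁,0;0,c₂] * !![x,y;z,w] * !![c₁,0;0,c₂]) ↔
      ((x*c₁*x + y*c₂*z = c₁*x*c₁ ∧ x*c₁*y + y*c₂*w = c₁*y*c₂) ∧
       (z*c₁*x + w*c₂*z = c₂*z*c₁ ∧ z*c₁*y + w*c₂*w = c₂*w*c₂)) := by
    intro x y z w
    simp [Matrix.mul_fin_two, ← Matrix.ext_iff, Fin.forall_fin_two, funext_iff]
  have hset : {X : Matrix (Fin 2) (Fin 2) F |
        X * !![c₁, 0; 0, c₂] * X = !![c₁, 0; 0, c₂] * X * !![c₁, 0; 0, c₂]} =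
      ({!![0, 0; 0, 0], !![c₁, 0; 0, 0], !![0, 0; 0, c₂]} :
          Set (Matrix (Fin 2) (Fin 2) F)) ∪
        {X : Matrix (Fin 2) (Fin 2) F | ∃ a : F, X = !![c₁, 0; a, c₂]} ∪
        {X : Matrix (Fin 2) (Fin 2) F | ∃ a : F, X = !![c₁, a; 0, c₂]} := by
    ext X
    obtain ⟨x, y, z, w, rfl⟩ : ∃ x y z w, X = !![x,y;z,w] := ⟨_, _, _, _, Matrix.eta_fin_two X⟩
    simp only [Set.mem_setOf_eq, Set.mem_union, Set.mem_insert_iff, Set.mem_singleton_iff,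
      key x y z w]
    constructor
    · rintro ⟨⟨e11, e12⟩, e21, e22⟩
      by_cases hB : c₁*x + c₂*w - c₁*c₂ = 0
      · have hw : w = c₂ := by
          have h0 : (c₁*c₂*c₂)*(w - c₂) = 0 := by
            linear_combination (-c₁)*e11 + c₂*e22 + c₂*(w-c₁)*hδ +
              (c₁*x + c₁*c₂ - c₂*w - c₁^2)*hB
          exact sub_eq_zero.mp ((mul_eq_zero.mp h0).resolve_left
            (mul_ne_zero (mul_ne_zero hc₁ hc₂) hc₂))
        have hx : x = c₁ := by
          have h0 : c₁*(x - c₁) = 0 := by linear_combination hB - c₂*hw - hδ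
          exact sub_eq_zero.mp ((mul_eq_zero.mp h0).resolve_left hc₁)
        have hyz : y*z = 0 := by
          have h0 : c₂*(y*z) = 0 := by linear_combination e11 - c₁*x*hx
          exact (mul_eq_zero.mp h0).resolve_left hc₂
        rcases mul_eq_zero.mp hyz with hy | hz
        · exact Or.inl (Or.inr ⟨z, by rw [hx, hy, hw]⟩)
        · exact Or.inr ⟨y, by rw [hx, hz, hw]⟩
      · have hy : y = 0 := by
          have h0 : y*(c₁*x + c₂*w - c₁*c₂) = 0 := by linear_combination e12
          exact (mul_eq_zero.mp h0).resolve_right hB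
        have hz : z = 0 := by
          have h0 : z*(c₁*x + c₂*w - c₁*c₂) = 0 := by linear_combination e21
          exact (mul_eq_zero.mp h0).resolve_right hB
        have hx : x = 0 ∨ x = c₁ := by
          have h0 : x*(x - c₁) = 0 := by
            have h1 : c₁*(x*(x - c₁)) = 0 := by linear_combination e11 - c₂*z*hy
            exact (mul_eq_zero.mp h1).resolve_left hc₁
          rcases mul_eq_zero.mp h0 with h | h
          · exact Or.inl h
          · exact Or.inr (sub_eq_zero.mp h)
        have hw : w = 0 ∨ w = c₂ := by
          have h0 : w*(w - c₂) = 0 := by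
            have h1 : c₂*(w*(w - c₂)) = 0 := by linear_combination e22 - c₁*y*hz
            exact (mul_eq_zero.mp h1).resolve_left hc₂
          rcases mul_eq_zero.mp h0 with h | h
          · exact Or.inl h
          · exact Or.inr (sub_eq_zero.mp h)
        rcases hx with hx | hx <;> rcases hw with hw | hw
        · exact Or.inl (Or.inl (Or.inl (by rw [hx, hy, hz, hw])))
        · exact Or.inl (Or.inl (Or.inr (Or.inr (by rw [hx, hy, hz, hw])))) 
        · exact Or.inl (Or.inl (Or.inr (Or.inl (by rw [hx, hy, hz, hw]))))
        · exact Or.inl (Or.inr ⟨0, by rw [hx, hy, hz, hw]⟩)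
    · have entry : ∀ (a b c d : F), (!![x,y;z,w] : Matrix (Fin 2) (Fin 2) F) = !![a,b;c,d] →
          x = a ∧ y = b ∧ z = c ∧ w = d := by
        intro a b c d h
        refine ⟨?_, ?_, ?_, ?_⟩
        · simpa using congr_fun (congr_fun h 0) 0
        · simpa using congr_fun (congr_fun h 0) 1
        · simpa using congr_fun (congr_fun h 1) 0
        · simpa using congr_fun (congr_fun h 1) 1
      rintro (((h | h | h) | ⟨a, h⟩) | ⟨a, h⟩)
      · obtain ⟨hx, hy, hz, hw⟩ := entry 0 0 0 0 h
        rw [hx, hy, hz, hw]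
        exact ⟨⟨by ring, by ring⟩, by ring, by ring⟩
      · obtain ⟨hx, hy, hz, hw⟩ := entry c₁ 0 0 0 h
        rw [hx, hy, hz, hw]
        exact ⟨⟨by ring, by ring⟩, by ring, by ring⟩
      · obtain ⟨hx, hy, hz, hw⟩ := entry 0 0 0 c₂ h
        rw [hx, hy, hz, hw]
        exact ⟨⟨by ring, by ring⟩, by ring, by ring⟩
      · obtain ⟨hx, hy, hz, hw⟩ := entry c₁ 0 a c₂ h
        rw [hx, hy, hz, hw]
        exact ⟨⟨by ring, by ring⟩, by linear_combination a*hδ, by ring⟩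
      · obtain ⟨hx, hy, hz, hw⟩ := entry c₁ a 0 c₂ h
        rw [hx, hy, hz, hw]
        exact ⟨⟨by ring, by linear_combination a*hδ⟩, by ring, by ring⟩
  refine ⟨?_, hset⟩
  rw [hset, Nat.card_coe_set_eq, Set.union_assoc]
  set E₁ : Set (Matrix (Fin 2) (Fin 2) F) := {X | ∃ a : F, X = !![c₁, 0; a, c₂]} with hE₁def
  set E₂ : Set (Matrix (Fin 2) (Fin 2) F) := {X | ∃ a : F, X = !![c₁, a; 0, c₂]} with hE₂def
  have hr₁ : E₁ = Set.range (fun a : F => !![c₁, 0; a, c₂]) := by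
    ext X; simp [hE₁def, eq_comm]
  have hr₂ : E₂ = Set.range (fun a : F => !![c₁, a; 0, c₂]) := by
    ext X; simp [hE₂def, eq_comm]
  have hcard₁ : E₁.ncard = Fintype.card F := by
    rw [← Nat.card_coe_set_eq, hr₁, Nat.card_range_of_injective, Nat.card_eq_fintype_card]
    intro a b hab
    simpa using congr_fun (congr_fun hab 1) 0
  have hcard₂ : E₂.ncard = Fintype.card F := by
    rw [← Nat.card_coe_set_eq, hr₂, Nat.card_range_of_injective, Nat.card_eq_fintype_card]
    intro a b hab
    simpa using congr_fun (congr_fun hab 0) 1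
  have hinter : E₁ ∩ E₂ = {!![c₁, 0; 0, c₂]} := by
    ext X
    constructor
    · rintro ⟨⟨a, rfl⟩, b, hb⟩
      have ha : a = 0 := by simpa using congr_fun (congr_fun hb 1) 0
      rw [ha]; rfl
    · rintro rfl
      exact ⟨⟨0, rfl⟩, ⟨0, rfl⟩⟩
  have hT : ({!![0, 0; 0, 0], !![c₁, 0; 0, 0], !![0, 0; 0, c₂]} :
      Set (Matrix (Fin 2) (Fin 2) F)).ncard = 3 := by
    rw [Set.ncard_insert_of_notMem, Set.ncard_pair]
    · intro h
      exact hc₁ (by simpa using congr_fun (congr_fun h 0) 0)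
    · rintro (h | h)
      · exact hc₁ ((by simpa using congr_fun (congr_fun h 0) 0 : (0:F) = c₁)).symm
      · exact hc₂ ((by simpa using congr_fun (congr_fun h 1) 1 : (0:F) = c₂)).symm
  have hdisj : Disjoint ({!![0, 0; 0, 0], !![c₁, 0; 0, 0], !![0, 0; 0, c₂]} :
      Set (Matrix (Fin 2) (Fin 2) F)) (E₁ ∪ E₂) := by
    rw [Set.disjoint_left]
    rintro X (rfl | rfl | rfl) (⟨a, h⟩ | ⟨a, h⟩) <;>
      first
      | exact hc₁ ((by simpa using congr_fun (congr_fun h 0) 0 : (0:F) = c₁)).symm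
      | exact hc₂ ((by simpa using congr_fun (congr_fun h 1) 1 : (0:F) = c₂)).symm
  rw [Set.ncard_union_eq hdisj, hT]
  have hu := Set.ncard_union_add_ncard_inter E₁ E₂
  rw [hinter, Set.ncard_singleton, hcard₁, hcard₂] at hu
  have hq : 1 ≤ Fintype.card F := Fintype.card_pos
  omega
end

section
/- Let F_q be a finite field and let c₁, c₂ be two distinct nonzero elements of F_q with δ := c₁² − c₁c₂ + c₂² ≠ 0. Let A₁ = [[c₁, 0], [0, c₂]] ∈ M₂(F_q). Then |D_{A₁}(F_q)| = q + 3, and D_{A₁}(F_q) equals the union of the four points {[[0,0],[0,0]], [[c₁,0],[0,0]], [[0,0],[0,c₂]], [[c₁,0],[0,c₂]]} with the family E₃ = {[[c₂²/(c₂−c₁), a],[b, c₁²/(c₁−c₂)]] : a, b ∈ F_q^× and ab = −c₁c₂δ/(c₁−c₂)²}. -/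
/-!
Write `X = !![x, y; z, w]`; for `A = diag(c₁, c₂)` the equation `XAX = AXA` is four polynomial
equations in the entries. If `y = z = 0` they decouple into `c₁x² = c₁²x` and `c₂w² = c₂²w`,
giving the four diagonal solutions. Otherwise `y` or `z` cancels and forces the trace condition
`c₁x + c₂w = c₁c₂`; together with the two diagonal equations this gives
`(c₁ - c₂)(c₁²x + c₂²w) = 0`, which pins down `x` and `w`, and then `yz = -c₁c₂δ/(c₁ - c₂)²`,
a nonzero constant because `δ ≠ 0`. These solutions are parametrised by `y ∈ F^×`, so there are
`q - 1` of them.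
-/

theorem diag_ybe_iff {R : Type*} [CommRing R] (c₁ c₂ x y z w : R) :
    !![x, y; z, w] * !![c₁, 0; 0, c₂] * !![x, y; z, w] =
        !![c₁, 0; 0, c₂] * !![x, y; z, w] * !![c₁, 0; 0, c₂] ↔
      c₁ * x ^ 2 + c₂ * y * z = c₁ ^ 2 * x ∧ y * (c₁ * x + c₂ * w) = c₁ * c₂ * y ∧
        z * (c₁ * x + c₂ * w) = c₁ * c₂ * z ∧ c₁ * y * z + c₂ * w ^ 2 = c₂ ^ 2 * w := by
  simp only [Matrix.mul_fin_two, EmbeddingLike.apply_eq_iff_eq, Matrix.vecCons_inj, and_true,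
    and_assoc]
  constructor <;> rintro ⟨h₁, h₂, h₃, h₄⟩ <;>
    exact ⟨by linear_combination h₁, by linear_combination h₂, by linear_combination h₃,
      by linear_combination h₄⟩

theorem ncard_diag_points {R : Type*} [Zero R] {c₁ c₂ : R} (hc₁ : c₁ ≠ 0) (hc₂ : c₂ ≠ 0) :
    ({!![0, 0; 0, 0], !![c₁, 0; 0, 0], !![0, 0; 0, c₂], !![c₁, 0; 0, c₂]} :
      Set (Matrix (Fin 2) (Fin 2) R)).ncard = 4 :=
  Set.ncard_eq_four.2 ⟨_, _, _, _, by simp [hc₁.symm], by simp [hc₂.symm], by simp [hc₁.symm],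
    by simp [hc₁], by simp [hc₂.symm], by simp [hc₁.symm], rfl⟩

section Field

variable {F : Type*} [Field F] {c₁ c₂ : F}

theorem eq_zero_or_eq_of_mul_sq_eq {c x : F} (hc : c ≠ 0) (h : c * x ^ 2 = c ^ 2 * x) :
    x = 0 ∨ x = c := by
  have : c * (x * (x - c)) = 0 := by linear_combination h
  simpa [hc, sub_eq_zero] using this

theorem diag_ybe_entries_of_trace (hc₁ : c₁ ≠ 0) (hc₂ : c₂ ≠ 0) (hne : c₁ ≠ c₂) {x y z w : F}
    (h₁ : c₁ * x ^ 2 + c₂ * y * z = c₁ ^ 2 * x) (h₄ : c₁ * y * z + c₂ * w ^ 2 = c₂ ^ 2 * w)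
    (htr : c₁ * x + c₂ * w = c₁ * c₂) :
    x = c₂ ^ 2 / (c₂ - c₁) ∧ w = c₁ ^ 2 / (c₁ - c₂) ∧
      y * z = -(c₁ * c₂ * (c₁ ^ 2 - c₁ * c₂ + c₂ ^ 2)) / (c₁ - c₂) ^ 2 := by
  have hd : c₁ - c₂ ≠ 0 := sub_ne_zero.2 hne
  have hd' : c₂ - c₁ ≠ 0 := sub_ne_zero.2 hne.symm
  have hsum : c₁ ^ 2 * x + c₂ ^ 2 * w = 0 :=
    (mul_eq_zero.1 (by linear_combination (c₁ * x - c₂ * w) * htr - c₁ * h₁ + c₂ * h₄ :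
      (c₁ - c₂) * (c₁ ^ 2 * x + c₂ ^ 2 * w) = 0)).resolve_left hd
  have hx : x * (c₂ - c₁) = c₂ ^ 2 :=
    mul_left_cancel₀ hc₁ (by linear_combination c₂ * htr - hsum)
  have hw : w * (c₁ - c₂) = c₁ ^ 2 :=
    mul_left_cancel₀ hc₂ (by linear_combination c₁ * htr - hsum)
  have hyz : y * z * (c₁ - c₂) ^ 2 = -(c₁ * c₂ * (c₁ ^ 2 - c₁ * c₂ + c₂ ^ 2)) :=
    mul_left_cancel₀ hc₂ (by
      linear_combination (c₁ - c₂) ^ 2 * h₁ - c₁ * (c₁ ^ 2 - c₁ * c₂ + c₂ ^ 2 + x * (c₂ - c₁)) * hx)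
  exact ⟨(eq_div_iff hd').2 hx, (eq_div_iff hd).2 hw, (eq_div_iff (pow_ne_zero 2 hd)).2 hyz⟩

theorem diag_ybe_of_entries (hne : c₁ ≠ c₂) {x y z w : F} (hx : x = c₂ ^ 2 / (c₂ - c₁))
    (hw : w = c₁ ^ 2 / (c₁ - c₂))
    (hyz : y * z = -(c₁ * c₂ * (c₁ ^ 2 - c₁ * c₂ + c₂ ^ 2)) / (c₁ - c₂) ^ 2) :
    c₁ * x ^ 2 + c₂ * y * z = c₁ ^ 2 * x ∧ y * (c₁ * x + c₂ * w) = c₁ * c₂ * y ∧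
        z * (c₁ * x + c₂ * w) = c₁ * c₂ * z ∧ c₁ * y * z + c₂ * w ^ 2 = c₂ ^ 2 * w := by
  have hd : c₁ - c₂ ≠ 0 := sub_ne_zero.2 hne
  have hd' : c₂ - c₁ ≠ 0 := sub_ne_zero.2 hne.symm
  replace hx : x * (c₂ - c₁) = c₂ ^ 2 := hx ▸ div_mul_cancel₀ _ hd'
  replace hw : w * (c₁ - c₂) = c₁ ^ 2 := hw ▸ div_mul_cancel₀ _ hd
  replace hyz : y * z * (c₁ - c₂) ^ 2 = -(c₁ * c₂ * (c₁ ^ 2 - c₁ * c₂ + c₂ ^ 2)) :=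
    hyz ▸ div_mul_cancel₀ _ (pow_ne_zero _ hd)
  have htr : c₁ * x + c₂ * w = c₁ * c₂ :=
    mul_right_cancel₀ hd (by linear_combination c₂ * hw - c₁ * hx)
  refine ⟨mul_right_cancel₀ (pow_ne_zero 2 hd') ?_, by rw [htr, mul_comm],
    by rw [htr, mul_comm], mul_right_cancel₀ (pow_ne_zero 2 hd) ?_⟩
  · linear_combination (c₁ * (x * (c₂ - c₁) + c₂ ^ 2) - c₁ ^ 2 * (c₂ - c₁)) * hx + c₂ * hyz
  · linear_combination c₁ * hyz + (c₂ * (w * (c₁ - c₂) + c₁ ^ 2) - c₂ ^ 2 * (c₁ - c₂)) * hw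

theorem neg_mul_mul_div_sub_sq_ne_zero (hc₁ : c₁ ≠ 0) (hc₂ : c₂ ≠ 0) (hne : c₁ ≠ c₂)
    (hδ : c₁ ^ 2 - c₁ * c₂ + c₂ ^ 2 ≠ 0) :
    -(c₁ * c₂ * (c₁ ^ 2 - c₁ * c₂ + c₂ ^ 2)) / (c₁ - c₂) ^ 2 ≠ 0 :=
  div_ne_zero (neg_ne_zero.2 (mul_ne_zero (mul_ne_zero hc₁ hc₂) hδ))
    (pow_ne_zero 2 (sub_ne_zero.2 hne))

theorem diag_ybe_iff_of_field (hc₁ : c₁ ≠ 0) (hc₂ : c₂ ≠ 0) (hne : c₁ ≠ c₂)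
    (hδ : c₁ ^ 2 - c₁ * c₂ + c₂ ^ 2 ≠ 0) (x y z w : F) :
    !![x, y; z, w] * !![c₁, 0; 0, c₂] * !![x, y; z, w] =
        !![c₁, 0; 0, c₂] * !![x, y; z, w] * !![c₁, 0; 0, c₂] ↔
      (y = 0 ∧ z = 0 ∧ (x = 0 ∨ x = c₁) ∧ (w = 0 ∨ w = c₂)) ∨
        (y ≠ 0 ∧ z ≠ 0 ∧ y * z = -(c₁ * c₂ * (c₁ ^ 2 - c₁ * c₂ + c₂ ^ 2)) / (c₁ - c₂) ^ 2 ∧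
          x = c₂ ^ 2 / (c₂ - c₁) ∧ w = c₁ ^ 2 / (c₁ - c₂)) := by
  rw [diag_ybe_iff]
  constructor
  · rintro ⟨h₁, h₂, h₃, h₄⟩
    by_cases hyz : y = 0 ∧ z = 0
    · obtain ⟨rfl, rfl⟩ := hyz
      exact Or.inl ⟨rfl, rfl, eq_zero_or_eq_of_mul_sq_eq hc₁ (by simpa using h₁),
        eq_zero_or_eq_of_mul_sq_eq hc₂ (by simpa using h₄)⟩
    have htr : c₁ * x + c₂ * w = c₁ * c₂ := by
      rcases not_and_or.1 hyz with hy | hz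
      · exact mul_left_cancel₀ hy (by linear_combination h₂)
      · exact mul_left_cancel₀ hz (by linear_combination h₃)
    obtain ⟨hx, hw, hyz⟩ := diag_ybe_entries_of_trace hc₁ hc₂ hne h₁ h₄ htr
    have hκ := neg_mul_mul_div_sub_sq_ne_zero hc₁ hc₂ hne hδ
    exact Or.inr ⟨left_ne_zero_of_mul (hyz ▸ hκ), right_ne_zero_of_mul (hyz ▸ hκ), hyz, hx, hw⟩
  · rintro (⟨rfl, rfl, hx, hw⟩ | ⟨-, -, hyz, hx, hw⟩)
    · rcases hx with rfl | rfl <;> rcases hw with rfl | rfl <;>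
        exact ⟨by ring, by ring, by ring, by ring⟩
    · exact diag_ybe_of_entries hne hx hw hyz

theorem setOf_diag_ybe_eq (hc₁ : c₁ ≠ 0) (hc₂ : c₂ ≠ 0) (hne : c₁ ≠ c₂)
    (hδ : c₁ ^ 2 - c₁ * c₂ + c₂ ^ 2 ≠ 0) :
    {X : Matrix (Fin 2) (Fin 2) F |
        X * !![c₁, 0; 0, c₂] * X = !![c₁, 0; 0, c₂] * X * !![c₁, 0; 0, c₂]} =
      ({!![0, 0; 0, 0], !![c₁, 0; 0, 0], !![0, 0; 0, c₂], !![c₁, 0; 0, c₂]} :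
          Set (Matrix (Fin 2) (Fin 2) F)) ∪
        {X : Matrix (Fin 2) (Fin 2) F | ∃ a b : F, a ≠ 0 ∧ b ≠ 0 ∧
          a * b = -(c₁ * c₂ * (c₁ ^ 2 - c₁ * c₂ + c₂ ^ 2)) / (c₁ - c₂) ^ 2 ∧
          X = !![c₂ ^ 2 / (c₂ - c₁), a; b, c₁ ^ 2 / (c₁ - c₂)]} := by
  ext X
  obtain ⟨x, y, z, w, rfl⟩ : ∃ x y z w, X = !![x, y; z, w] := ⟨_, _, _, _, X.eta_fin_two⟩
  rw [Set.mem_ofPred_eq, diag_ybe_iff_of_field hc₁ hc₂ hne hδ]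
  simp only [ne_eq, exists_and_left, Set.mem_union, Set.mem_insert_iff,
    EmbeddingLike.apply_eq_iff_eq, Matrix.vecCons_inj, and_true, Set.mem_singleton_iff,
    Set.mem_ofPred_eq, ↓existsAndEq, true_and]
  exact or_congr_left (by tauto)

theorem ncard_setOf_offDiag_mul_eq [Finite F] {κ : F} (hκ : κ ≠ 0) (p r : F) :
    {X : Matrix (Fin 2) (Fin 2) F |
        ∃ a b : F, a ≠ 0 ∧ b ≠ 0 ∧ a * b = κ ∧ X = !![p, a; b, r]}.ncard = Nat.card F - 1 := by
  have : {X : Matrix (Fin 2) (Fin 2) F |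
        ∃ a b : F, a ≠ 0 ∧ b ≠ 0 ∧ a * b = κ ∧ X = !![p, a; b, r]} =
      (fun a => !![p, a; κ / a, r]) '' {0}ᶜ := by
    ext X
    simp only [Set.mem_ofPred_eq, Set.mem_image, Set.mem_compl_singleton_iff]
    constructor
    · rintro ⟨a, b, ha, -, rfl, rfl⟩
      exact ⟨a, ha, by rw [mul_div_cancel_left₀ _ ha]⟩
    · rintro ⟨a, ha, rfl⟩
      exact ⟨a, _, ha, div_ne_zero hκ ha, mul_div_cancel₀ _ ha, rfl⟩
  rw [this, Set.ncard_image_of_injective _ fun a a' h => by simpa using congr_fun₂ h 0 1,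
    Set.ncard_compl, Set.ncard_singleton]

end Field

/-- For `A₁ = diag(c₁, c₂)` with `c₁, c₂` distinct nonzero and
`δ = c₁² − c₁c₂ + c₂² ≠ 0`, the solution set has cardinality `q + 3` and consists of
four isolated points together with the family `E₃`. -/
theorem stmt_8 {F : Type*} [Field F] [Fintype F] (c₁ c₂ : F)
    (hc₁ : c₁ ≠ 0) (hc₂ : c₂ ≠ 0) (hne : c₁ ≠ c₂)
    (hδ : c₁ ^ 2 - c₁ * c₂ + c₂ ^ 2 ≠ 0) :
    Nat.card {X : Matrix (Fin 2) (Fin 2) F |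
        X * !![c₁, 0; 0, c₂] * X = !![c₁, 0; 0, c₂] * X * !![c₁, 0; 0, c₂]} =
      Fintype.card F + 3 ∧
    {X : Matrix (Fin 2) (Fin 2) F |
        X * !![c₁, 0; 0, c₂] * X = !![c₁, 0; 0, c₂] * X * !![c₁, 0; 0, c₂]} =
      ({!![0, 0; 0, 0], !![c₁, 0; 0, 0], !![0, 0; 0, c₂], !![c₁, 0; 0, c₂]} :
          Set (Matrix (Fin 2) (Fin 2) F)) ∪
        {X : Matrix (Fin 2) (Fin 2) F | ∃ a b : F, a ≠ 0 ∧ b ≠ 0 ∧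
          a * b = -(c₁ * c₂ * (c₁ ^ 2 - c₁ * c₂ + c₂ ^ 2)) / (c₁ - c₂) ^ 2 ∧
          X = !![c₂ ^ 2 / (c₂ - c₁), a; b, c₁ ^ 2 / (c₁ - c₂)]} := by
  refine ⟨?_, setOf_diag_ybe_eq hc₁ hc₂ hne hδ⟩
  rw [setOf_diag_ybe_eq hc₁ hc₂ hne hδ, Nat.card_coe_set_eq, Set.ncard_union_eq ?disjoint,
    ncard_diag_points hc₁ hc₂,
    ncard_setOf_offDiag_mul_eq (neg_mul_mul_div_sub_sq_ne_zero hc₁ hc₂ hne hδ),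
    Nat.card_eq_fintype_card]
  · have := Fintype.card_pos (α := F)
    omega
  case disjoint =>
    rw [Set.disjoint_left]
    rintro X (rfl | rfl | rfl | rfl) ⟨a, _, ha, -, -, hX⟩ <;>
      exact ha (by simpa using (congr_fun₂ hX 0 1).symm)
end

section
/- Let F_q be a finite field and let A₂ = [[0, 1], [0, 0]] ∈ M₂(F_q). Then the number of solutions X ∈ M₂(F_q) of the Yang–Baxter matrix equation XA₂X = A₂XA₂ is exactly 2q² − q, i.e., |D_{A₂}(F_q)| = 2q² − q. -/
/-!
Writing `X = [[a, b], [c, d]]` and `N = [[0, 1], [0, 0]]`, the equation `X N X = N X N` reads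
`c a = 0`, `a d = 0`, `c² = 0`, `c d = 0`; without zero divisors this is just
`c = 0 ∧ a d = 0`, with `b` free. The pairs `(a, d)` with `a d = 0` are the two coordinate axes, `2q − 1` points, so there
are `q (2q − 1)` solutions.
-/

open Matrix

section

variable {R : Type*}

theorem yangBaxter_nilpotent_iff [CommRing R] [NoZeroDivisors R]
    (X : Matrix (Fin 2) (Fin 2) R) :
    X * !![(0 : R), 1; 0, 0] * X = !![(0 : R), 1; 0, 0] * X * !![(0 : R), 1; 0, 0] ↔
      X 1 0 = 0 ∧ X 0 0 * X 1 1 = 0 := by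
  rw [eta_fin_two X]
  simp only [mul_fin_two, ← ext_iff, Fin.forall_fin_two, of_apply, cons_val_zero, cons_val_one,
    cons_val']
  ring_nf
  constructor
  · rintro ⟨⟨-, had⟩, hc, -⟩
    have hc : X 1 0 = 0 := sq_eq_zero_iff.mp hc
    exact ⟨hc, by simpa [hc] using had⟩
  · rintro ⟨hc, had⟩
    simp [hc, had]

theorem Nat.card_prod_mul_eq_zero [MulZeroClass R] [NoZeroDivisors R] [Finite R] :
    Nat.card {p : R × R // p.1 * p.2 = 0} = 2 * Nat.card R - 1 := by
  have hAxes : {p : R × R | p.1 * p.2 = 0} = ({0} ×ˢ Set.univ) ∪ (Set.univ ×ˢ {0}) := by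
    ext p
    simp
  have hOrigin : ({0} ×ˢ Set.univ) ∩ (Set.univ ×ˢ {0}) = ({(0, 0)} : Set (R × R)) := by
    ext p
    simp [Prod.ext_iff, and_comm]
  have h := Set.ncard_union_add_ncard_inter ({(0 : R)} ×ˢ (Set.univ : Set R)) (Set.univ ×ˢ {0})
  rw [← hAxes, hOrigin] at h
  simp only [Set.ncard_prod, Set.ncard_singleton, Set.ncard_univ, one_mul, mul_one] at h
  change Nat.card {p : R × R | p.1 * p.2 = 0} = _
  rw [Nat.card_coe_set_eq]
  omega

def yangBaxterNilpotentSolutionsEquiv [CommRing R] [NoZeroDivisors R] :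
    {X : Matrix (Fin 2) (Fin 2) R |
        X * !![(0 : R), 1; 0, 0] * X = !![(0 : R), 1; 0, 0] * X * !![(0 : R), 1; 0, 0]} ≃
      R × {p : R × R // p.1 * p.2 = 0} where
  toFun X :=
    (X.1 0 1, ⟨(X.1 0 0, X.1 1 1),
      ((yangBaxter_nilpotent_iff X.1).mp X.2).2⟩)
  invFun p := ⟨!![p.2.1.1, p.1; 0, p.2.1.2],
    (yangBaxter_nilpotent_iff _).mpr ⟨rfl, p.2.2⟩⟩
  left_inv X := by
    have hc := ((yangBaxter_nilpotent_iff X.1).mp X.2).1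
    ext i j
    fin_cases i <;> fin_cases j <;> simp [hc]
  right_inv p := rfl

end

/-- For `A₂ = [[0, 1], [0, 0]]` over a finite field of order `q`, the Yang–Baxter
matrix equation `X A₂ X = A₂ X A₂` has exactly `2q² − q` solutions. -/
theorem stmt_9 {F : Type*} [Field F] [Fintype F] :
    Nat.card {X : Matrix (Fin 2) (Fin 2) F |
        X * !![(0 : F), 1; 0, 0] * X = !![(0 : F), 1; 0, 0] * X * !![(0 : F), 1; 0, 0]} =
      2 * Fintype.card F ^ 2 - Fintype.card F := by
  rw [Nat.card_congr yangBaxterNilpotentSolutionsEquiv, Nat.card_prod, Nat.card_prod_mul_eq_zero,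
    Nat.card_eq_fintype_card, Nat.mul_sub, mul_one, mul_left_comm, ← pow_two]
end

section
/- Let F_q be a finite field and let A₂ = [[0, 1], [0, 0]] ∈ M₂(F_q). Then the solution set D_{A₂}(F_q) equals the union of the two families {[[0,a],[0,b]] : a, b ∈ F_q} and {[[a,b],[0,0]] : a, b ∈ F_q}; equivalently, a matrix X = [[x₁₁, x₁₂], [x₂₁, x₂₂]] ∈ M₂(F_q) satisfies XA₂X = A₂XA₂ if and only if x₂₁ = 0 and x₁₁x₂₂ = 0. -/
lemma key_10 {F : Type*} [Field F] (X : Matrix (Fin 2) (Fin 2) F) :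
    X * !![(0 : F), 1; 0, 0] * X = !![(0 : F), 1; 0, 0] * X * !![(0 : F), 1; 0, 0] ↔
      X 1 0 = 0 ∧ X 0 0 * X 1 1 = 0 := by
  rw [Matrix.eta_fin_two X]
  simp only [Matrix.mul_fin_two, Matrix.ext_iff.symm, Fin.forall_fin_two]
  simp
  constructor
  · rintro ⟨⟨_, h2⟩, h10, _⟩
    rw [h10] at h2
    exact ⟨h10, mul_eq_zero.mp h2⟩
  · rintro ⟨h10, h⟩
    refine ⟨⟨Or.inr h10, ?_⟩, h10, Or.inl h10⟩
    rw [h10]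
    exact mul_eq_zero.mpr h

/-- For `A₂ = [[0, 1], [0, 0]]` over a finite field, the solution set of
`X A₂ X = A₂ X A₂` is the union of the two explicit `2`-parameter families;
equivalently `X` is a solution iff `x₂₁ = 0` and `x₁₁ x₂₂ = 0`. -/
theorem stmt_10 {F : Type*} [Field F] [Fintype F] :
    {X : Matrix (Fin 2) (Fin 2) F |
        X * !![(0 : F), 1; 0, 0] * X = !![(0 : F), 1; 0, 0] * X * !![(0 : F), 1; 0, 0]} =
      {X : Matrix (Fin 2) (Fin 2) F | ∃ a b : F, X = !![0, a; 0, b]} ∪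
        {X : Matrix (Fin 2) (Fin 2) F | ∃ a b : F, X = !![a, b; 0, 0]} ∧
    ∀ X : Matrix (Fin 2) (Fin 2) F,
      (X * !![(0 : F), 1; 0, 0] * X = !![(0 : F), 1; 0, 0] * X * !![(0 : F), 1; 0, 0] ↔
        X 1 0 = 0 ∧ X 0 0 * X 1 1 = 0) := by
  constructor
  · ext X
    simp only [Set.mem_setOf_eq, Set.mem_union, key_10]
    constructor
    · rintro ⟨h10, h⟩
      rcases mul_eq_zero.mp h with h00 | h11
      · exact Or.inl ⟨X 0 1, X 1 1, by
          conv_lhs => rw [Matrix.eta_fin_two X]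
          rw [h00, h10]⟩
      · exact Or.inr ⟨X 0 0, X 0 1, by
          conv_lhs => rw [Matrix.eta_fin_two X]
          rw [h11, h10]⟩
    · rintro (⟨a, b, rfl⟩ | ⟨a, b, rfl⟩) <;> simp
  · exact fun X => key_10 X
end

section
/- Let F_q be a finite field, let c ∈ F_q be nonzero, and let A₂ = [[c, 1], [0, c]] ∈ M₂(F_q). Then |D_{A₂}(F_q)| = q + 2, and D_{A₂}(F_q) equals the union of the two points {[[0,0],[0,0]], [[c,1],[0,c]]} with the family E = {[[2c − a, c⁻²a² − 2c⁻¹a + 1], [−c², a]] : a ∈ F_q}. -/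
section aux

variable {F : Type*} [Field F]

private lemma aux_scalar (c x y z w : F) (hc : c ≠ 0)
    (e11 : c*x*x + (x + c*y)*z = c*(c*x + z))
    (e12 : c*x*y + (x + c*y)*w = (c*x + z) + c*(c*y + w))
    (e21 : c*z*x + (z + c*w)*z = c*(c*z))
    (e22 : c*z*y + (z + c*w)*w = c*z + c*(c*w)) :
    (x = 0 ∧ y = 0 ∧ z = 0 ∧ w = 0) ∨ (x = c ∧ y = 1 ∧ z = 0 ∧ w = c) ∨
    (x = 2*c - w ∧ y = c⁻¹^2 * w^2 - 2*c⁻¹*w + 1 ∧ z = -c^2) := by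
  rcases eq_or_ne z 0 with hz | hz
  · subst hz
    have hx : x = 0 ∨ x = c := by
      have h : x * (c * (x - c)) = 0 := by linear_combination e11
      rcases mul_eq_zero.1 h with h | h
      · exact Or.inl h
      · rcases mul_eq_zero.1 h with h | h
        · exact absurd h hc
        · exact Or.inr (by linear_combination h)
    have hw : w = 0 ∨ w = c := by
      have h : w * (c * (w - c)) = 0 := by linear_combination e22
      rcases mul_eq_zero.1 h with h | h
      · exact Or.inl h
      · rcases mul_eq_zero.1 h with h | h
        · exact absurd h hc
        · exact Or.inr (by linear_combination h)
    rcases hx with hx | hx <;> rcases hw with hw | hw <;> rw [hx, hw] at e12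
    · left
      refine ⟨hx, ?_, rfl, hw⟩
      have h : c * (c * y) = 0 := by linear_combination -e12
      simpa [hc, mul_eq_zero] using h
    · exfalso
      have h : c * c = 0 := by linear_combination -e12
      simpa [hc, mul_eq_zero] using h
    · exfalso
      have h : c * c = 0 := by linear_combination -e12
      simpa [hc, mul_eq_zero] using h
    · right; left
      refine ⟨hx, ?_, rfl, hw⟩
      have h : c * (c * (y - 1)) = 0 := by linear_combination e12
      simpa [hc, mul_eq_zero, sub_eq_zero] using h
  · -- z ≠ 0
    have hz2 : z = c^2 - c*x - c*w := by
      have h : z * (c*x + z + c*w - c^2) = 0 := by linear_combination e21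
      rcases mul_eq_zero.1 h with h' | h'
      · exact absurd h' hz
      · linear_combination h'
    subst hz2
    have hs : x + w = 2*c := by
      have h : c^2 * (x + w - 2*c) = 0 := by linear_combination c*e12 + e11
      rcases mul_eq_zero.1 h with h' | h'
      · exact absurd h' (pow_ne_zero 2 hc)
      · linear_combination h'
    have hw : w = 2*c - x := by linear_combination hs
    subst hw
    have hy : c^2 * y = (x - c)^2 := by
      have h : c * (c^2 * y - (x - c)^2) = 0 := by linear_combination -e11
      rcases mul_eq_zero.1 h with h' | h'
      · exact absurd h' hc
      · linear_combination h'
    right; right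
    refine ⟨by ring, ?_, by ring⟩
    have h2 : y = (x - c)^2 / c^2 := by
      rw [eq_div_iff (pow_ne_zero 2 hc)]
      linear_combination hy
    rw [h2]
    field_simp
    ring

end aux

/-- For `A₂ = [[c, 1], [0, c]]` with `c ≠ 0` over a finite field of order `q`, the
solution set has cardinality `q + 2` and consists of the two points `0`, `A₂` together
with the one-parameter family `E`. -/
theorem stmt_11 {F : Type*} [Field F] [Fintype F] (c : F) (hc : c ≠ 0) :
    Nat.card {X : Matrix (Fin 2) (Fin 2) F |
        X * !![c, 1; 0, c] * X = !![c, 1; 0, c] * X * !![c, 1; 0, c]} =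
      Fintype.card F + 2 ∧
    {X : Matrix (Fin 2) (Fin 2) F |
        X * !![c, 1; 0, c] * X = !![c, 1; 0, c] * X * !![c, 1; 0, c]} =
      ({!![0, 0; 0, 0], !![c, 1; 0, c]} : Set (Matrix (Fin 2) (Fin 2) F)) ∪
        {X : Matrix (Fin 2) (Fin 2) F | ∃ a : F,
          X = !![2 * c - a, c⁻¹ ^ 2 * a ^ 2 - 2 * c⁻¹ * a + 1; -c ^ 2, a]} := by
  set f : F → Matrix (Fin 2) (Fin 2) F :=
    fun a => !![2 * c - a, c⁻¹ ^ 2 * a ^ 2 - 2 * c⁻¹ * a + 1; -c ^ 2, a] with hf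
  have hseteq : {X : Matrix (Fin 2) (Fin 2) F |
        X * !![c, 1; 0, c] * X = !![c, 1; 0, c] * X * !![c, 1; 0, c]} =
      ({!![0, 0; 0, 0], !![c, 1; 0, c]} : Set (Matrix (Fin 2) (Fin 2) F)) ∪
        {X : Matrix (Fin 2) (Fin 2) F | ∃ a : F, X = f a} := by
    ext X
    simp only [Set.mem_setOf_eq, Set.mem_union, Set.mem_insert_iff, Set.mem_singleton_iff]
    rw [Matrix.eta_fin_two X]
    set x := X 0 0; set y := X 0 1; set z := X 1 0; set w := X 1 1
    constructor
    · intro h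
      simp only [Matrix.mul_fin_two] at h
      rw [← Matrix.ext_iff] at h
      simp only [Fin.forall_fin_two, Matrix.cons_val', Matrix.cons_val_zero, Matrix.cons_val_one,
        Matrix.head_cons, Matrix.empty_val', Matrix.cons_val_fin_one, Matrix.head_fin_const,
        Matrix.of_apply] at h
      obtain ⟨⟨e11, e12⟩, e21, e22⟩ := h
      rcases aux_scalar c x y z w hc (by linear_combination e11) (by linear_combination e12)
          (by linear_combination e21) (by linear_combination e22) with
        ⟨h1, h2, h3, h4⟩ | ⟨h1, h2, h3, h4⟩ | ⟨h1, h2, h3⟩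
      · left; left; rw [h1, h2, h3, h4]
      · left; right; rw [h1, h2, h3, h4]
      · right; exact ⟨w, by rw [h1, h2, h3]⟩
    · rintro ((h | h) | ⟨a, h⟩)
      · rw [h]
        try (simp only [Matrix.mul_fin_two]; rw [← Matrix.ext_iff]
             intro i j; fin_cases i <;> fin_cases j <;> (simp; try ring))
      · rw [h]
        try (simp only [Matrix.mul_fin_two]; rw [← Matrix.ext_iff]
             intro i j; fin_cases i <;> fin_cases j <;> (simp; try ring))
      · rw [h, hf]
        try (simp only [Matrix.mul_fin_two]; rw [← Matrix.ext_iff]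
             intro i j; fin_cases i <;> fin_cases j <;>
               (try simp; try ring; try field_simp; try ring))
  have hrange : {X : Matrix (Fin 2) (Fin 2) F | ∃ a : F, X = f a} = Set.range f := by
    ext X; simp [eq_comm]
  refine ⟨?_, by rw [hseteq, hf]⟩
  rw [hseteq, hrange, Nat.card_coe_set_eq, Set.ncard_union_eq, Set.ncard_pair, add_comm]
  · congr 1
    rw [← Nat.card_coe_set_eq, Nat.card_range_of_injective, Nat.card_eq_fintype_card]
    intro a b hab
    have := congrFun (congrFun hab 1) 1
    simpa [hf] using this
  · intro h
    simpa using congrFun (congrFun h 0) 1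
  · rw [Set.disjoint_left]
    rintro M (hM | hM) ⟨a, rfl⟩ <;>
    · have := congrFun (congrFun hM.symm 1) 0
      simp [hf] at this
      exact hc this
end

section
/- Let F_q be a finite field of characteristic different from 2, and let a, b ∈ F_q be such that the polynomial x² − ax + b is irreducible over F_q and the discriminant Δ := a² − 4b satisfies Δ = −b. Let A₃ = [[0, −b], [1, a]] ∈ M₂(F_q). Then the only solutions X ∈ M₂(F_q) of XA₃X = A₃XA₃ are X = 0 and X = A₃; in particular |D_{A₃}(F_q)| = 2. -/
/-!
Write `A` for the companion matrix of `p = X² - aX + b`. Its centralizer is `F[A]`, a field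
because `p` is irreducible, so a nonzero solution `X` commuting with `A` is invertible, and the
equation `XAX = AXA` becomes `X² = AX`, leaving `X = 0` and `X = A`.

A solution cannot fail to commute with `A`: the entries of `(tr(XA) - b) • (XA - AX)` are
polynomial combinations of the entries of `XAX - AXA`, so such a solution has `tr(XA) = det A`.
Then `Y = X - A` has `tr Y = 0` and `tr(YA) = det Y = 3b - a²`, which vanishes because `Δ = -b`.
On matrices with `tr Y = tr(YA) = 0` the determinant is minus the norm form `s² + asu + bu²`
of `F[A]`, which is anisotropic, so `Y = 0`, i.e. `X = A`, which does commute with `A`.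
-/

open Polynomial Matrix

section

variable {F : Type*} [Field F] {a b : F}

abbrev companion (a b : F) : Matrix (Fin 2) (Fin 2) F := !![0, -b; 1, a]

lemma eq_zero_of_sq_add_mul_add_mul_sq_eq_zero
    (hirr : Irreducible (X ^ 2 - C a * X + C b : F[X])) {s u : F}
    (h : s ^ 2 + a * s * u + b * u ^ 2 = 0) : s = 0 ∧ u = 0 := by
  by_cases hu : u = 0
  · subst hu
    exact ⟨pow_eq_zero_iff two_ne_zero |>.mp (by simpa using h), rfl⟩
  · have hroot : (X ^ 2 - C a * X + C b : F[X]).IsRoot (-s / u) := by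
      simp only [IsRoot, eval_add, eval_sub, eval_mul, eval_pow, eval_X, eval_C]
      field_simp
      linear_combination h
    have hdeg : (X ^ 2 - C a * X + C b : F[X]).degree = 2 := by compute_degree!
    exact absurd (hdeg ▸ degree_eq_one_of_irreducible_of_root hirr hroot) (by decide)

lemma ne_zero_of_irreducible_X_sq_sub_C_mul_X_add_C
    (hirr : Irreducible (X ^ 2 - C a * X + C b : F[X])) : b ≠ 0 := by
  intro hb
  simpa using (eq_zero_of_sq_add_mul_add_mul_sq_eq_zero hirr (s := 0) (u := 1) (by simp [hb])).2

lemma yangBaxter_companion_entries {x y z w : F}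
    (h : !![x, y; z, w] * companion a b * !![x, y; z, w] =
        companion a b * !![x, y; z, w] * companion a b) :
      x * y + z * (a * y - b * x) = -(b * w) ∧
      y ^ 2 + w * (a * y - b * x) = b ^ 2 * z - a * b * w ∧
      x * w + z * (a * w - b * z) = y + a * w ∧
      w * y + w * (a * w - b * z) = a * (y + a * w) - b * (x + a * z) := by
  simp only [companion, mul_fin_two, EmbeddingLike.apply_eq_iff_eq, vecCons_inj, and_true] at h
  obtain ⟨⟨h₀₀, h₀₁⟩, h₁₀, h₁₁⟩ := h
  exact ⟨by linear_combination h₀₀, by linear_combination h₀₁, by linear_combination h₁₀,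
    by linear_combination h₁₁⟩

lemma trace_mul_companion_sub_smul_commutator_eq_zero {M : Matrix (Fin 2) (Fin 2) F}
    (h : M * companion a b * M = companion a b * M * companion a b) :
    ((M * companion a b).trace - b) • (M * companion a b - companion a b * M) = 0 := by
  obtain ⟨x, y, z, w, rfl⟩ : ∃ x y z w, M = !![x, y; z, w] := ⟨_, _, _, _, M.eta_fin_two⟩
  obtain ⟨h₀₀, h₀₁, h₁₀, h₁₁⟩ := yangBaxter_companion_entries h
  simp only [companion, mul_fin_two, trace_fin_two_of]
  ext i j
  fin_cases i <;> fin_cases j <;>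
    simp only [Matrix.smul_apply, Matrix.sub_apply, of_apply, cons_val', cons_val_zero,
      cons_val_one, empty_val', cons_val_fin_one, Matrix.zero_apply, smul_eq_mul, Fin.zero_eta,
      Fin.mk_one]
  · linear_combination h₀₁ + b * h₁₀
  · linear_combination a * h₀₁ - b * h₀₀ + b * h₁₁
  · linear_combination h₁₁ - h₀₀ - a * h₁₀
  · linear_combination -h₀₁ - b * h₁₀

lemma trace_det_sub_companion_of_yangBaxter (hb : b ≠ 0) {M : Matrix (Fin 2) (Fin 2) F}
    (h : M * companion a b * M = companion a b * M * companion a b)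
    (hT : (M * companion a b).trace = b) :
    (M - companion a b).trace = 0 ∧ ((M - companion a b) * companion a b).trace = 3 * b - a ^ 2 ∧
      (M - companion a b).det = 3 * b - a ^ 2 := by
  obtain ⟨x, y, z, w, rfl⟩ : ∃ x y z w, M = !![x, y; z, w] := ⟨_, _, _, _, M.eta_fin_two⟩
  obtain ⟨-, -, h₁₀, h₁₁⟩ := yangBaxter_companion_entries h
  simp only [companion, mul_fin_two, trace_fin_two_of] at hT
  simp only [companion, sub_eq_add_neg, neg_of, neg_cons, neg_zero, neg_neg, neg_empty, of_add_of,
    add_cons, head_cons, tail_cons, empty_add_empty, mul_fin_two, trace_fin_two_of, det_fin_two_of]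
  have htr : x + w - a = 0 := by
    refine (mul_eq_zero.1 ?_).resolve_left hb
    linear_combination h₁₁ + (a - w) * hT
  refine ⟨by linear_combination htr, by linear_combination hT, ?_⟩
  linear_combination h₁₀ + (2 - z) * hT - a * htr

lemma eq_zero_of_trace_eq_zero_of_det_eq_zero
    (hirr : Irreducible (X ^ 2 - C a * X + C b : F[X])) {M : Matrix (Fin 2) (Fin 2) F}
    (htr : M.trace = 0) (htrA : (M * companion a b).trace = 0) (hdet : M.det = 0) : M = 0 := by
  obtain ⟨s, t, u, v, rfl⟩ : ∃ s t u v, M = !![s, t; u, v] := ⟨_, _, _, _, M.eta_fin_two⟩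
  simp only [companion, mul_fin_two, trace_fin_two_of, det_fin_two_of] at htr htrA hdet
  obtain ⟨rfl, rfl⟩ := eq_zero_of_sq_add_mul_add_mul_sq_eq_zero hirr
    (s := s) (u := u) (by linear_combination -hdet + (s + a * u) * htr - u * htrA)
  obtain rfl : v = 0 := by linear_combination htr
  obtain rfl : t = 0 := by linear_combination htrA
  exact (eta_fin_two 0).symm

lemma eq_zero_of_commute_of_det_eq_zero
    (hirr : Irreducible (X ^ 2 - C a * X + C b : F[X])) {M : Matrix (Fin 2) (Fin 2) F}
    (hc : Commute M (companion a b)) (hdet : M.det = 0) : M = 0 := by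
  obtain ⟨x, y, z, w, rfl⟩ : ∃ x y z w, M = !![x, y; z, w] := ⟨_, _, _, _, M.eta_fin_two⟩
  have hc' := hc.eq
  simp only [companion, mul_fin_two, EmbeddingLike.apply_eq_iff_eq, vecCons_inj, and_true]
    at hc'
  obtain ⟨⟨h₀₀, -⟩, h₁₀, -⟩ := hc'
  simp only [det_fin_two_of] at hdet
  obtain ⟨rfl, rfl⟩ := eq_zero_of_sq_add_mul_add_mul_sq_eq_zero hirr
    (s := x) (u := z) (by linear_combination hdet - x * h₁₀ + z * h₀₀)
  obtain rfl : y = 0 := by linear_combination h₀₀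
  obtain rfl : w = 0 := by linear_combination h₁₀
  exact (eta_fin_two 0).symm

lemma commute_companion_of_yangBaxter (hirr : Irreducible (X ^ 2 - C a * X + C b : F[X]))
    (hΔ : a ^ 2 - 4 * b = -b) {M : Matrix (Fin 2) (Fin 2) F}
    (h : M * companion a b * M = companion a b * M * companion a b) :
    Commute M (companion a b) := by
  by_contra hc
  have hT : (M * companion a b).trace = b := by
    have := trace_mul_companion_sub_smul_commutator_eq_zero h
    exact sub_eq_zero.1 ((smul_eq_zero.1 this).resolve_right (sub_ne_zero.2 hc))
  have hb := ne_zero_of_irreducible_X_sq_sub_C_mul_X_add_C hirr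
  obtain ⟨htr, htrA, hdet⟩ := trace_det_sub_companion_of_yangBaxter hb h hT
  have hΔ' : 3 * b - a ^ 2 = 0 := by linear_combination -hΔ
  have hM : M - companion a b = 0 :=
    eq_zero_of_trace_eq_zero_of_det_eq_zero hirr htr (htrA.trans hΔ') (hdet.trans hΔ')
  exact hc (sub_eq_zero.1 hM ▸ Commute.refl _)

lemma eq_zero_or_eq_companion_of_commute (hirr : Irreducible (X ^ 2 - C a * X + C b : F[X]))
    {M : Matrix (Fin 2) (Fin 2) F} (hc : Commute M (companion a b))
    (h : M * companion a b * M = companion a b * M * companion a b) :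
    M = 0 ∨ M = companion a b := by
  have hA : IsUnit (companion a b) := by
    simpa [isUnit_iff_isUnit_det, det_fin_two_of] using
      ne_zero_of_irreducible_X_sq_sub_C_mul_X_add_C hirr
  have hsq : M * M = companion a b * M := hA.mul_left_cancel <| by
    rw [← mul_assoc, ← hc.eq, h, mul_assoc, hc.eq]
  by_cases hdet : M.det = 0
  · exact .inl (eq_zero_of_commute_of_det_eq_zero hirr hc hdet)
  · have hM : IsUnit M := (isUnit_iff_isUnit_det M).2 (Ne.isUnit hdet)
    refine .inr (sub_eq_zero.1 ((hM.mul_left_eq_zero).1 ?_))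
    rw [sub_mul, hsq, sub_self]

end

theorem stmt_12_general {F : Type*} [Field F] (a b : F)
    (hirr : Irreducible (Polynomial.X ^ 2 - Polynomial.C a * Polynomial.X + Polynomial.C b))
    (hΔ : a ^ 2 - 4 * b = -b) :
    {X : Matrix (Fin 2) (Fin 2) F |
        X * !![0, -b; 1, a] * X = !![0, -b; 1, a] * X * !![0, -b; 1, a]} =
      ({0, !![0, -b; 1, a]} : Set (Matrix (Fin 2) (Fin 2) F)) ∧
    Nat.card {X : Matrix (Fin 2) (Fin 2) F |
        X * !![0, -b; 1, a] * X = !![0, -b; 1, a] * X * !![0, -b; 1, a]} = 2 := by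
  have hset : {X : Matrix (Fin 2) (Fin 2) F |
      X * companion a b * X = companion a b * X * companion a b} = {0, companion a b} := by
    ext M
    refine ⟨fun h => eq_zero_or_eq_companion_of_commute hirr
      (commute_companion_of_yangBaxter hirr hΔ h) h, ?_⟩
    rintro (rfl | rfl)
    · simp only [Set.mem_ofPred_eq, mul_zero, zero_mul]
    · rfl
  have hne : (0 : Matrix (Fin 2) (Fin 2) F) ≠ companion a b := fun h => by
    simpa using congrFun (congrFun h 1) 0
  exact ⟨hset, by rw [hset, Nat.card_coe_set_eq, Set.ncard_pair hne]⟩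

/-- Over a finite field of odd characteristic, if `x² − ax + b` is irreducible and
`Δ = a² − 4b = −b`, then the only solutions of `X A₃ X = A₃ X A₃` for
`A₃ = [[0, −b], [1, a]]` are `X = 0` and `X = A₃`; in particular there are exactly two. -/
theorem stmt_12 {F : Type*} [Field F] [Fintype F] (hchar : ringChar F ≠ 2) (a b : F)
    (hirr : Irreducible (Polynomial.X ^ 2 - Polynomial.C a * Polynomial.X + Polynomial.C b))
    (hΔ : a ^ 2 - 4 * b = -b) :
    {X : Matrix (Fin 2) (Fin 2) F |
        X * !![0, -b; 1, a] * X = !![0, -b; 1, a] * X * !![0, -b; 1, a]} =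
      ({0, !![0, -b; 1, a]} : Set (Matrix (Fin 2) (Fin 2) F)) ∧
    Nat.card {X : Matrix (Fin 2) (Fin 2) F |
        X * !![0, -b; 1, a] * X = !![0, -b; 1, a] * X * !![0, -b; 1, a]} = 2 :=
  stmt_12_general a b hirr hΔ
end

section
/- Let F_q be a finite field of characteristic different from 2 and let a, b ∈ F_q be such that Δ := a² − 4b is a non-square in F_q and Δ = −b (so that a² = 3b and a, b ≠ 0). In the polynomial ring R = F_q[x₁₁, x₁₂, x₂₁, x₂₂], define 𝔭₁ = ⟨x₁₁ + x₂₂ − a, x₁₂ − b·x₂₁ + a·x₂₂ − b, x₂₁² − (a/b)x₂₁x₂₂ + x₂₁ + (1/b)x₂₂² − (a/b)x₂₂ + 1⟩, 𝔭₂ = ⟨x₁₁ + 2x₂₂ − a, x₁₂ + a·x₂₂ − b, x₂₁ − (a/b)x₂₂ + 1, x₂₂² − a·x₂₂ + b⟩, and 𝔭₃ = ⟨x₁₁, x₁₂, x₂₁, x₂₂⟩. Then 𝔭₁, 𝔭₂, and 𝔭₃ are prime ideals of R. -/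
/-!
Each ideal is the kernel of a ring map from `R` to a domain. For `𝔭₃` this is evaluation at
`0`. For `𝔭₂` it is the map to `F[t]/(t² - a t + b)` with `x₂₂ ↦ t`, the other variables going
to the values forced by the linear generators; this quotient is a field because the discriminant
`a² - 4b` is a non-square. For `𝔭₁` it is the map to
`F[t][s]/(s² + (1 - (a/b)t)s + (t²/b - (a/b)t + 1))` with `x₂₂ ↦ t`, `x₂₁ ↦ s`. The
discriminant of this monic quadratic over `F[t]` has leading coefficient `(a² - 4b)/b²`, a
non-square, so it is not a square in `F[t]` and the quadratic has no root, hence is irreducible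
over the UFD `F[t]`.

The ideal lies in the kernel by direct computation; for the reverse inclusion, a ring map back
into `R ⧸ 𝔭` composes with the first one to the quotient map.
-/

theorem Ideal.isPrime_of_comp_eq_mk {R S : Type*} [CommRing R] [CommRing S] [IsDomain S]
    {I : Ideal R} {α : R →+* S} (hI : I ≤ RingHom.ker α) {β : S →+* R ⧸ I}
    (h : β.comp α = Ideal.Quotient.mk I) : I.IsPrime := by
  have hker : RingHom.ker α = I := le_antisymm (fun r hr => by
    rw [← Ideal.Quotient.eq_zero_iff_mem, ← h, RingHom.comp_apply, RingHom.mem_ker.mp hr,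
      map_zero]) hI
  exact hker ▸ RingHom.ker_isPrime α

namespace Polynomial

theorem not_isSquare_of_not_isSquare_leadingCoeff {R : Type*} [CommSemiring R]
    [NoZeroDivisors R] {p : R[X]} (h : ¬IsSquare p.leadingCoeff) : ¬IsSquare p := by
  rintro ⟨r, rfl⟩
  exact h ⟨_, leadingCoeff_mul r r⟩

theorem irreducible_X_sq_add_C_mul_X_add_C {A : Type*} [CommRing A] [IsDomain A] {p q : A}
    (h : ¬IsSquare (discrim 1 p q)) : Irreducible (X ^ 2 + C p * X + C q) := by
  have hmonic : (X ^ 2 + C p * X + C q).Monic := by monicity!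
  have hdeg : (X ^ 2 + C p * X + C q).natDegree = 2 := by compute_degree!
  rw [hmonic.irreducible_iff_roots_eq_zero_of_degree_le_three hdeg.ge (by rw [hdeg]; norm_num)]
  refine Multiset.eq_zero_of_forall_notMem fun r hr => h ⟨2 * r + p, ?_⟩
  have hroot : r ^ 2 + p * r + q = 0 := by simpa using (mem_roots hmonic.ne_zero).mp hr
  rw [discrim_eq_sq_of_quadratic_eq_zero (x := r) (by linear_combination hroot)]
  ring

end Polynomial

namespace MvPolynomial

open scoped Polynomial

theorem isPrime_span_range_X {σ R : Type*} [CommRing R] [IsDomain R] :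
    (Ideal.span (Set.range (X : σ → MvPolynomial σ R))).IsPrime := by
  refine Ideal.isPrime_of_comp_eq_mk (α := constantCoeff) (β := (Ideal.Quotient.mk _).comp C)
    (Ideal.span_le.mpr ?_) (ringHom_ext (fun r => ?_) (fun i => ?_))
  · rintro _ ⟨i, rfl⟩
    simp
  · simp
  · have hX : X i ∈ Ideal.span (Set.range (X : σ → MvPolynomial σ R)) :=
      Ideal.subset_span ⟨i, rfl⟩
    simp [Ideal.Quotient.eq_zero_iff_mem.mpr hX]

theorem isPrime_𝔭₂ {F : Type*} [Field F] {a b : F} (h : ¬IsSquare (a ^ 2 - 4 * b)) :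
    (Ideal.span {X 0 + 2 * X 3 - C a, X 1 + C a * X 3 - C b, X 2 - C (a / b) * X 3 + 1,
      X 3 ^ 2 - C a * X 3 + C b} : Ideal (MvPolynomial (Fin 4) F)).IsPrime := by
  set q : F[X] := .X ^ 2 + .C (-a) * .X + .C b
  have : Fact (Irreducible q) := ⟨Polynomial.irreducible_X_sq_add_C_mul_X_add_C
    (by rwa [discrim, mul_one, neg_sq])⟩
  have hroot : AdjoinRoot.root q ^ 2 - .of q a * AdjoinRoot.root q + .of q b = 0 := by
    simpa [q, sub_eq_add_neg] using AdjoinRoot.eval₂_root q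
  generalize hI : Ideal.span (α := MvPolynomial (Fin 4) F) _ = I
  have hrel := Ideal.span_le.mp (hI.trans_le (Ideal.mk_ker (I := I)).ge)
  simp only [Set.insert_subset_iff, Set.singleton_subset_iff, SetLike.mem_coe, RingHom.mem_ker,
    map_add, map_sub, map_mul, map_pow, map_one, map_ofNat] at hrel
  obtain ⟨h₀, h₁, h₂, h₃⟩ := hrel
  have hlift : q.eval₂ ((Ideal.Quotient.mk I).comp C) (Ideal.Quotient.mk I (X 3)) = 0 := by
    simp [q]
    linear_combination h₃
  refine Ideal.isPrime_of_comp_eq_mk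
    (α := eval₂Hom (AdjoinRoot.of q) ![.of q a - 2 * .root q, .of q b - .of q a * .root q,
      .of q (a / b) * .root q - 1, .root q])
    (β := AdjoinRoot.lift _ _ hlift) (hI ▸ Ideal.span_le.mpr ?ker) ?comp
  case ker => simpa [Set.insert_subset_iff] using hroot
  refine ringHom_ext (fun c => ?_) (fun i => ?_)
  · simp
  -- `β` lands in `R ⧸ I`, not a field: `of q (a / b)` must not be split by `map_div₀`.
  · fin_cases i <;> simp [-map_div₀, map_ofNat]
    · linear_combination -h₀
    · linear_combination -h₁
    · linear_combination -h₂

/-- The generator of `𝔭₁` of degree two in `x₂₁`, as a polynomial in `x₂₁` over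
`F[x₂₂]`. -/
noncomputable def 𝔭₁Quadratic {F : Type*} [Field F] (a b : F) : F[X][X] :=
  .X ^ 2 + .C (1 - .C (a / b) * .X) * .X + .C (.C (1 / b) * .X ^ 2 - .C (a / b) * .X + 1)

theorem irreducible_𝔭₁Quadratic {F : Type*} [Field F] {a b : F}
    (h : ¬IsSquare (a ^ 2 - 4 * b)) : Irreducible (𝔭₁Quadratic a b) := by
  have hb : b ≠ 0 := by
    rintro rfl
    exact h ⟨a, by ring⟩
  have hdiscrim : discrim 1 (1 - .C (a / b) * .X) (.C (1 / b) * .X ^ 2 - .C (a / b) * .X + 1) =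
      .C ((a ^ 2 - 4 * b) / b ^ 2) * .X ^ 2 + .C (2 * (a / b)) * .X + (.C (-3) : F[X]) := by
    rw [show (a ^ 2 - 4 * b) / b ^ 2 = (a / b) ^ 2 - 4 * (1 / b) by field_simp]
    simp only [discrim, map_sub, map_mul, map_pow, map_neg, map_ofNat]
    ring
  have hlc : ¬IsSquare ((a ^ 2 - 4 * b) / b ^ 2) := by
    rintro ⟨s, hs⟩
    exact h ⟨b * s, by rw [div_eq_iff (pow_ne_zero 2 hb)] at hs; rw [hs]; ring⟩
  refine Polynomial.irreducible_X_sq_add_C_mul_X_add_C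
    (Polynomial.not_isSquare_of_not_isSquare_leadingCoeff ?_)
  rwa [hdiscrim, Polynomial.leadingCoeff_quadratic (fun h0 => hlc ⟨0, by simp [h0]⟩)]

theorem isPrime_𝔭₁ {F : Type*} [Field F] {a b : F} (h : ¬IsSquare (a ^ 2 - 4 * b)) :
    (Ideal.span {X 0 + X 3 - C a, X 1 - C b * X 2 + C a * X 3 - C b,
      X 2 ^ 2 - C (a / b) * X 2 * X 3 + X 2 + C (1 / b) * X 3 ^ 2 - C (a / b) * X 3 + 1} :
      Ideal (MvPolynomial (Fin 4) F)).IsPrime := by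
  set q := 𝔭₁Quadratic a b
  have : IsDomain (AdjoinRoot q) :=
    AdjoinRoot.isDomain_of_prime (irreducible_𝔭₁Quadratic h).prime
  have hroot : (𝔭₁Quadratic a b).eval₂ (AdjoinRoot.of q) (.root q) = 0 :=
    AdjoinRoot.eval₂_root q
  simp only [𝔭₁Quadratic, Polynomial.eval₂_add, Polynomial.eval₂_mul, Polynomial.eval₂_pow,
    Polynomial.eval₂_X, Polynomial.eval₂_C] at hroot
  simp only [one_div, map_add, map_sub, map_mul, map_one, map_pow] at hroot
  generalize hI : Ideal.span (α := MvPolynomial (Fin 4) F) _ = I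
  have hrel := Ideal.span_le.mp (hI.trans_le (Ideal.mk_ker (I := I)).ge)
  simp only [Set.insert_subset_iff, Set.singleton_subset_iff, SetLike.mem_coe, RingHom.mem_ker,
    map_add, map_sub, map_mul, map_pow, map_one] at hrel
  obtain ⟨h₀, h₁, h₂⟩ := hrel
  set κ := Polynomial.eval₂RingHom ((Ideal.Quotient.mk I).comp C) (Ideal.Quotient.mk I (X 3))
  have hlift : q.eval₂ κ (Ideal.Quotient.mk I (X 2)) = 0 := by
    simp only [q, 𝔭₁Quadratic, κ, Polynomial.eval₂_add, Polynomial.eval₂_sub,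
      Polynomial.eval₂_mul, Polynomial.eval₂_pow, Polynomial.eval₂_X, Polynomial.eval₂_C,
      Polynomial.eval₂_one, Polynomial.coe_eval₂RingHom, RingHom.comp_apply]
    linear_combination h₂
  refine Ideal.isPrime_of_comp_eq_mk
    (α := eval₂Hom ((AdjoinRoot.of q).comp Polynomial.C) ![.of q (.C a - .X),
      .of q (.C b) * .root q - .of q (.C a * .X - .C b), .root q, .of q .X])
    (β := AdjoinRoot.lift κ _ hlift) (hI ▸ Ideal.span_le.mpr ?ker) ?comp
  case ker =>
    simp [Set.insert_subset_iff]
    linear_combination hroot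
  refine ringHom_ext (fun c => ?_) (fun i => ?_)
  · simp [κ]
  · fin_cases i <;> simp [κ]
    · linear_combination -h₀
    · linear_combination -h₁

end MvPolynomial

theorem stmt_14_general {F : Type*} [Field F] (a b : F)
    (hns : ¬∃ c : F, c ^ 2 = a ^ 2 - 4 * b) :
    let x : Fin 4 → MvPolynomial (Fin 4) F := MvPolynomial.X
    let C : F → MvPolynomial (Fin 4) F := MvPolynomial.C
    let p₁ : Ideal (MvPolynomial (Fin 4) F) := Ideal.span
      {x 0 + x 3 - C a, x 1 - C b * x 2 + C a * x 3 - C b,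
        x 2 ^ 2 - C (a / b) * x 2 * x 3 + x 2 + C (1 / b) * x 3 ^ 2 - C (a / b) * x 3 + 1}
    let p₂ : Ideal (MvPolynomial (Fin 4) F) := Ideal.span
      {x 0 + 2 * x 3 - C a, x 1 + C a * x 3 - C b, x 2 - C (a / b) * x 3 + 1,
        x 3 ^ 2 - C a * x 3 + C b}
    let p₃ : Ideal (MvPolynomial (Fin 4) F) := Ideal.span {x 0, x 1, x 2, x 3}
    p₁.IsPrime ∧ p₂.IsPrime ∧ p₃.IsPrime := by
  have hΔ : ¬IsSquare (a ^ 2 - 4 * b) := fun ⟨c, hc⟩ => hns ⟨c, by rw [hc, sq]⟩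
  refine ⟨MvPolynomial.isPrime_𝔭₁ hΔ, MvPolynomial.isPrime_𝔭₂ hΔ, ?_⟩
  convert MvPolynomial.isPrime_span_range_X (σ := Fin 4) (R := F)
  ext
  simp [Fin.exists_fin_succ, eq_comm]

/-- Over a finite field of odd characteristic, with `Δ = a² − 4b` a non-square and
`Δ = −b`, the three ideals `𝔭₁, 𝔭₂, 𝔭₃` of `R = F_q[x₁₁, x₁₂, x₂₁, x₂₂]`
(variables `X 0, X 1, X 2, X 3`) are prime. -/
theorem stmt_14 {F : Type*} [Field F] [Fintype F] (hchar : ringChar F ≠ 2) (a b : F)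
    (hns : ¬∃ c : F, c ^ 2 = a ^ 2 - 4 * b) (hΔ : a ^ 2 - 4 * b = -b) :
    let x : Fin 4 → MvPolynomial (Fin 4) F := MvPolynomial.X
    let C : F → MvPolynomial (Fin 4) F := MvPolynomial.C
    let p₁ : Ideal (MvPolynomial (Fin 4) F) := Ideal.span
      {x 0 + x 3 - C a, x 1 - C b * x 2 + C a * x 3 - C b,
        x 2 ^ 2 - C (a / b) * x 2 * x 3 + x 2 + C (1 / b) * x 3 ^ 2 - C (a / b) * x 3 + 1}
    let p₂ : Ideal (MvPolynomial (Fin 4) F) := Ideal.span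
      {x 0 + 2 * x 3 - C a, x 1 + C a * x 3 - C b, x 2 - C (a / b) * x 3 + 1,
        x 3 ^ 2 - C a * x 3 + C b}
    let p₃ : Ideal (MvPolynomial (Fin 4) F) := Ideal.span {x 0, x 1, x 2, x 3}
    p₁.IsPrime ∧ p₂.IsPrime ∧ p₃.IsPrime :=
  stmt_14_general a b hns
end

section
/- Let F_q be a finite field, let c ∈ F_q be nonzero, and let A₂ = [[c, 1], [0, c]] ∈ M₂(F_q). If X = [[x₁₁, x₁₂], [x₂₁, x₂₂]] ∈ M₂(F_q) satisfies XA₂X = A₂XA₂ and x₂₁ ≠ 0, then x₂₁ = −c², x₁₁ = 2c − x₂₂, and x₁₂ = c⁻²x₂₂² − 2c⁻¹x₂₂ + 1. -/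
/-!
Comparing the four entries of `X A₂ X = A₂ X A₂` gives four polynomial equations. The `(2,1)` entry
reads `x₂₁ (c x₁₁ + x₂₁ + c x₂₂) = c² x₂₁`, so `x₂₁ ≠ 0` forces `x₂₁ = c² − c (x₁₁ + x₂₂)`.
Substituting this, `c` times the `(1,2)` entry plus the `(2,2)` entry collapses to
`c² (x₁₁ + x₂₂ − 2c) = 0`, which fixes the trace and hence `x₂₁ = −c²`; the `(1,1)` entry then
becomes `c³ x₁₂ = c (c − x₂₂)²`.
-/

namespace JordanBlockYangBaxter

variable {R : Type*} [CommRing R] {c x₁₁ x₁₂ x₂₁ x₂₂ : R}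

theorem iff_entries :
    !![x₁₁, x₁₂; x₂₁, x₂₂] * !![c, 1; 0, c] * !![x₁₁, x₁₂; x₂₁, x₂₂] =
        !![c, 1; 0, c] * !![x₁₁, x₁₂; x₂₁, x₂₂] * !![c, 1; 0, c] ↔
      c * x₁₁ ^ 2 + (x₁₁ + c * x₁₂) * x₂₁ = c ^ 2 * x₁₁ + c * x₂₁ ∧
      c * x₁₁ * x₁₂ + (x₁₁ + c * x₁₂) * x₂₂ = c * x₁₁ + x₂₁ + c ^ 2 * x₁₂ + c * x₂₂ ∧
      x₂₁ * (c * x₁₁ + x₂₁ + c * x₂₂) = c ^ 2 * x₂₁ ∧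
      c * x₂₁ * x₁₂ + (x₂₁ + c * x₂₂) * x₂₂ = c * x₂₁ + c ^ 2 * x₂₂ := by
  simp only [← Matrix.ext_iff, Fin.forall_fin_two, Matrix.mul_apply, Fin.sum_univ_two,
    Matrix.of_apply, Matrix.cons_val', Matrix.cons_val_zero, Matrix.cons_val_one,
    Matrix.empty_val', Matrix.cons_val_fin_one]
  constructor
  · rintro ⟨⟨h₁₁, h₁₂⟩, h₂₁, h₂₂⟩
    exact ⟨by linear_combination h₁₁, by linear_combination h₁₂, by linear_combination h₂₁,
      by linear_combination h₂₂⟩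
  · rintro ⟨h₁₁, h₁₂, h₂₁, h₂₂⟩
    exact ⟨⟨by linear_combination h₁₁, by linear_combination h₁₂⟩, by linear_combination h₂₁,
      by linear_combination h₂₂⟩

variable (hX : !![x₁₁, x₁₂; x₂₁, x₂₂] * !![c, 1; 0, c] * !![x₁₁, x₁₂; x₂₁, x₂₂] =
    !![c, 1; 0, c] * !![x₁₁, x₁₂; x₂₁, x₂₂] * !![c, 1; 0, c])
include hX

theorem lower_left_eq [IsDomain R] (h21 : x₂₁ ≠ 0) : x₂₁ = c ^ 2 - c * (x₁₁ + x₂₂) := by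
  obtain ⟨-, -, h₂₁, -⟩ := iff_entries.mp hX
  have h := mul_left_cancel₀ h21 (h₂₁.trans (mul_comm _ _))
  linear_combination h

theorem trace_eq [IsDomain R] (hc : c ≠ 0) (h21 : x₂₁ ≠ 0) : x₁₁ + x₂₂ = 2 * c := by
  obtain ⟨-, h₁₂, -, h₂₂⟩ := iff_entries.mp hX
  have hx₂₁ := lower_left_eq hX h21
  have h : c ^ 2 * (x₁₁ + x₂₂ - 2 * c) = 0 := by
    linear_combination c * h₁₂ + h₂₂ - (c * x₁₂ + x₂₂ - 2 * c) * hx₂₁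
  linear_combination (mul_eq_zero.mp h).resolve_left (pow_ne_zero 2 hc)

theorem lower_left_eq_neg_sq [IsDomain R] (hc : c ≠ 0) (h21 : x₂₁ ≠ 0) : x₂₁ = -c ^ 2 := by
  linear_combination lower_left_eq hX h21 - c * trace_eq hX hc h21

theorem sq_mul_upper_right_eq [IsDomain R] (hc : c ≠ 0) (h21 : x₂₁ ≠ 0) :
    c ^ 2 * x₁₂ = (x₂₂ - c) ^ 2 := by
  obtain ⟨h₁₁, -⟩ := iff_entries.mp hX
  have hx₂₁ := lower_left_eq_neg_sq hX hc h21
  have hx₁₁ : x₁₁ = 2 * c - x₂₂ := by linear_combination trace_eq hX hc h21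
  subst hx₂₁ hx₁₁
  refine mul_left_cancel₀ hc ?_
  linear_combination -h₁₁

end JordanBlockYangBaxter

open JordanBlockYangBaxter in
theorem stmt_19_general {F : Type*} [Field F] (c : F) (hc : c ≠ 0)
    (x₁₁ x₁₂ x₂₁ x₂₂ : F)
    (hX : !![x₁₁, x₁₂; x₂₁, x₂₂] * !![c, 1; 0, c] * !![x₁₁, x₁₂; x₂₁, x₂₂] =
      !![c, 1; 0, c] * !![x₁₁, x₁₂; x₂₁, x₂₂] * !![c, 1; 0, c])
    (h21 : x₂₁ ≠ 0) :
    x₂₁ = -c ^ 2 ∧ x₁₁ = 2 * c - x₂₂ ∧ x₁₂ = c⁻¹ ^ 2 * x₂₂ ^ 2 - 2 * c⁻¹ * x₂₂ + 1 := by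
  refine ⟨lower_left_eq_neg_sq hX hc h21, by linear_combination trace_eq hX hc h21, ?_⟩
  field_simp
  linear_combination sq_mul_upper_right_eq hX hc h21

/-- For `A₂ = [[c, 1], [0, c]]` with `c ≠ 0` over a finite field, any solution
`X = [[x₁₁, x₁₂], [x₂₁, x₂₂]]` of `X A₂ X = A₂ X A₂` with `x₂₁ ≠ 0` satisfies
`x₂₁ = −c²`, `x₁₁ = 2c − x₂₂` and `x₁₂ = c⁻²x₂₂² − 2c⁻¹x₂₂ + 1`. -/
theorem stmt_19 {F : Type*} [Field F] [Fintype F] (c : F) (hc : c ≠ 0)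
    (x₁₁ x₁₂ x₂₁ x₂₂ : F)
    (hX : !![x₁₁, x₁₂; x₂₁, x₂₂] * !![c, 1; 0, c] * !![x₁₁, x₁₂; x₂₁, x₂₂] =
      !![c, 1; 0, c] * !![x₁₁, x₁₂; x₂₁, x₂₂] * !![c, 1; 0, c])
    (h21 : x₂₁ ≠ 0) :
    x₂₁ = -c ^ 2 ∧ x₁₁ = 2 * c - x₂₂ ∧ x₁₂ = c⁻¹ ^ 2 * x₂₂ ^ 2 - 2 * c⁻¹ * x₂₂ + 1 :=
  stmt_19_general c hc x₁₁ x₁₂ x₂₁ x₂₂ hX h21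
end
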